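/- arXiv:2309.15196 — 8 statements merged into one kernel-verified Lean document; each statement's English description precedes it below -/
import Mathlib

section
/- For any connected graphs G and H and any function f : V(G) → V(H), the Sierpiński product G ⊗_f H is connected. -/
open SimpleGraph

/-- The Sierpiński product of graphs `G` and `H` with respect to `f`. -/
def sierpinskiProd {α β : Type*} (G : SimpleGraph α) (H : SimpleGraph β) (f : α → β) :
    SimpleGraph (α × β) where
  Adj p q := (p.1 = q.1 ∧ H.Adj p.2 q.2) ∨ (G.Adj p.1 q.1 ∧ p.2 = f q.1 ∧ q.2 = f p.1)
  symm := by
    constructor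
    rintro p q (⟨h1, h2⟩ | ⟨h1, h2, h3⟩)
    · exact Or.inl ⟨h1.symm, h2.symm⟩
    · exact Or.inr ⟨h1.symm, h3, h2⟩
  loopless := by
    constructor
    rintro p (⟨-, h⟩ | ⟨h, -⟩)
    · exact H.irrefl h
    · exact G.irrefl h

/-- A set `S` of vertices resolves the graph `G`. -/
def IsResolvingSet {V : Type*} (G : SimpleGraph V) (S : Set V) : Prop :=
  ∀ u v : V, (∀ s ∈ S, G.dist u s = G.dist v s) → u = v

/-- The metric dimension of a graph. -/
noncomputable def metricDim {V : Type*} (G : SimpleGraph V) : ℕ :=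
  sInf {n | ∃ S : Set V, S.ncard = n ∧ IsResolvingSet G S}

/-- A graph is a path if it is isomorphic to some path graph. -/
def IsPathGraph {V : Type*} (G : SimpleGraph V) : Prop :=
  ∃ n, Nonempty (G ≃g pathGraph n)


theorem sierpinskiProd_connected {α β : Type*} (G : SimpleGraph α) (H : SimpleGraph β)
    (f : α → β) (hG : G.Connected) (hH : H.Connected) :
    (sierpinskiProd G H f).Connected := by
  have hcopy : ∀ (g : α) (h h' : β), (sierpinskiProd G H f).Reachable (g, h) (g, h') := by
    intro g h h'
    obtain ⟨w⟩ := hH.preconnected h h'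
    induction w with
    | nil => rfl
    | @cons x y _ a _ ih =>
      exact Reachable.trans
        (Adj.reachable (show (sierpinskiProd G H f).Adj (g, x) (g, y) from Or.inl ⟨rfl, a⟩)) ih
  rw [connected_iff]
  constructor
  · rintro ⟨g, h⟩ ⟨g', h'⟩
    obtain ⟨w⟩ := hG.preconnected g g'
    induction w with
    | nil => exact hcopy _ _ _
    | @cons u v _ a _ ih =>
      exact (hcopy u h (f v)).trans
        ((Adj.reachable (show (sierpinskiProd G H f).Adj (u, f v) (v, f u) from
          Or.inr ⟨a, rfl, rfl⟩)).trans ((hcopy v (f u) h).trans ih))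
  · obtain ⟨g⟩ := hG.nonempty; obtain ⟨h⟩ := hH.nonempty; exact ⟨(g, h)⟩
end

section
/- If T₁ is a tree and T₂ is a tree with at least 3 vertices, then for every function f : V(T₁) → V(T₂), dim(T₁ ⊗_f T₂) ≤ n(T₁)·dim(T₂), where n(T₁) is the number of vertices of T₁. -/
open SimpleGraph

namespace SierpinskiAux

variable {α β : Type*} {T₁ : SimpleGraph α} {T₂ : SimpleGraph β} {f : α → β}

/-- The homomorphism embedding a copy of `T₂` into the Sierpiński product. -/
def copyHom (T₁ : SimpleGraph α) (T₂ : SimpleGraph β) (f : α → β) (g : α) :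
    T₂ →g sierpinskiProd T₁ T₂ f where
  toFun b := (g, b)
  map_rel' h := Or.inl ⟨rfl, h⟩

/-- The length of the canonical walk in the Sierpiński product from `(a, b)` to `(c, w)`
following the walk `p : a → c` in `T₁`. -/
noncomputable def cost (T₂ : SimpleGraph β) (f : α → β) :
    ∀ {a c : α}, T₁.Walk a c → β → β → ℕ
  | _, _, .nil, b, w => T₂.dist b w
  | a, _, @SimpleGraph.Walk.cons _ _ _ a₁ _ _ q, b, w =>
      T₂.dist b (f a₁) + 1 + cost T₂ f q (f a) w

@[simp] lemma cost_nil {a : α} (b w : β) :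
    cost T₂ f (.nil : T₁.Walk a a) b w = T₂.dist b w := rfl

@[simp] lemma cost_cons {a a₁ c : α} (adj : T₁.Adj a a₁) (q : T₁.Walk a₁ c) (b w : β) :
    cost T₂ f (.cons adj q) b w = T₂.dist b (f a₁) + 1 + cost T₂ f q (f a) w := rfl

lemma exists_walk_cost (h2 : T₂.Connected) :
    ∀ {a c : α} (p : T₁.Walk a c) (b w : β),
      ∃ W : (sierpinskiProd T₁ T₂ f).Walk (a, b) (c, w), W.length = cost T₂ f p b w := by
  intro a c p
  induction p with
  | nil =>
    intro b w
    obtain ⟨q, hq⟩ := h2.exists_walk_length_eq_dist b w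
    exact ⟨q.map (copyHom T₁ T₂ f _), (Walk.length_map _ q).trans hq⟩
  | @cons a a₁ c adj q ih =>
    intro b w
    obtain ⟨q₁, hq₁⟩ := h2.exists_walk_length_eq_dist b (f a₁)
    obtain ⟨W₂, hW₂⟩ := ih (f a) w
    have cross : (sierpinskiProd T₁ T₂ f).Adj (a, f a₁) (a₁, f a) := Or.inr ⟨adj, rfl, rfl⟩
    obtain ⟨W₁, hW₁⟩ : ∃ W₁ : (sierpinskiProd T₁ T₂ f).Walk (a, b) (a, f a₁),
        W₁.length = q₁.length := ⟨q₁.map (copyHom T₁ T₂ f a), Walk.length_map _ _⟩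
    refine ⟨W₁.append (Walk.cons cross W₂), ?_⟩
    rw [Walk.length_append, Walk.length_cons, hW₁, hq₁, hW₂, cost_cons]
    omega

lemma cost_append_cons {x y z : α} (p : T₁.Walk x y) (adj : T₁.Adj y z) (b w : β) :
    cost T₂ f (p.append (.cons adj .nil)) b w
      = cost T₂ f p b (f z) + 1 + T₂.dist (f y) w := by
  induction p generalizing b with
  | nil => simp
  | @cons u u₁ _ adj' q ih => simp [ih]; omega

lemma claimA :
    ∀ {y c : α} (q : T₁.Walk y c) {x : α} (adj : T₁.Adj x y),
      ∃ s e C C', 1 ≤ C ∧ 1 ≤ C' ∧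
        (∀ b w, cost T₂ f (.cons adj q) b w = T₂.dist b s + C + T₂.dist e w) ∧
        (∀ b w, cost T₂ f (Walk.cons adj q).reverse b w
          = T₂.dist b e + C' + T₂.dist s w) := by
  intro y c q
  induction q with
  | nil =>
    rename_i y'
    intro x adj
    exact ⟨f y', f x, 1, 1, le_refl _, le_refl _, fun b w => by simp,
      fun b w => by simp [Walk.reverse_cons]⟩
  | @cons y y₁ c adj' q' ih =>
    intro x adj
    obtain ⟨s, e, C, C', hC, hC', hcost, hcostrev⟩ := ih adj'
    refine ⟨f y, e, 1 + T₂.dist (f x) s + C, C' + T₂.dist s (f x) + 1, by omega, by omega,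
      fun b w => ?_, fun b w => ?_⟩
    · rw [cost_cons, hcost]; omega
    · rw [Walk.reverse_cons, cost_append_cons, hcostrev]
      have hc := SimpleGraph.dist_comm (G := T₂) (u := s) (v := f x)
      omega

section Target

variable {c : α} {P : ∀ a : α, T₁.Walk a c}

lemma lipschitz (h2 : T₂.Connected)
    (hP : ∀ a, (P a).IsPath) (hU : ∀ a (q : T₁.Walk a c), q.IsPath → q = P a) (d : β) :
    ∀ {x y : α × β}, (sierpinskiProd T₁ T₂ f).Adj x y →
      cost T₂ f (P y.1) y.2 d ≤ cost T₂ f (P x.1) x.2 d + 1 := by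
  classical
  have dlip : ∀ {b b' : β} (x : β), T₂.Adj b b' → T₂.dist b' x ≤ T₂.dist b x + 1 := by
    intro b b' x hbb
    calc T₂.dist b' x ≤ T₂.dist b' b + T₂.dist b x := h2.dist_triangle
      _ ≤ 1 + T₂.dist b x := by
          have : T₂.dist b' b ≤ 1 := by simpa using dist_le (Walk.cons hbb.symm Walk.nil)
          omega
      _ = T₂.dist b x + 1 := by omega
  rintro ⟨a, b⟩ ⟨a', b'⟩ (⟨heq, hadj⟩ | ⟨hadj, hb, hb'⟩)
  · simp only at heq hadj ⊢
    subst heq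
    cases hw : P a with
    | nil => simp only [cost_nil]; exact dlip d hadj
    | cons adj₂ q =>
      rename_i a₁
      simp only [cost_cons]
      have := dlip (f a₁) hadj
      omega
  · simp only at hadj hb hb' ⊢
    subst hb; subst hb'
    by_cases h : a' ∈ (P a).support
    · by_cases h' : a ∈ (P a').support
      · exfalso
        have hdr : ((P a).dropUntil a' h).IsPath := (hP a).dropUntil h
        have hdreq : (P a).dropUntil a' h = P a' := hU a' _ hdr
        rw [← hdreq] at h'
        have hnodup := (hP a).support_nodup
        rw [← Walk.take_spec (P a) h, Walk.support_append] at hnodup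
        have hdisj := List.disjoint_of_nodup_append hnodup
        have h1 : a ∈ ((P a).takeUntil a' h).support := Walk.start_mem_support _
        have h2' : a ∈ ((P a).dropUntil a' h).support.tail := by
          have := Walk.support_eq_cons ((P a).dropUntil a' h)
          rw [this, List.mem_cons] at h'
          rcases h' with h' | h'
          · exact absurd h' hadj.ne
          · exact h'
        exact hdisj h1 h2'
      · have heq : Walk.cons hadj (P a') = P a := hU a _ ((hP a').cons h')
        rw [← heq, cost_cons]
        simp only [SimpleGraph.dist_self]
        omega
    · have heq : Walk.cons hadj.symm (P a) = P a' := hU a' _ ((hP a).cons h)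
      rw [← heq, cost_cons]
      simp only [SimpleGraph.dist_self]
      omega

lemma cost_le_walk_length (h2 : T₂.Connected)
    (hP : ∀ a, (P a).IsPath) (hU : ∀ a (q : T₁.Walk a c), q.IsPath → q = P a) (d : β) :
    ∀ {x : α × β} (w : (sierpinskiProd T₁ T₂ f).Walk x (c, d)),
      cost T₂ f (P x.1) x.2 d ≤ w.length := by
  suffices H : ∀ {x y : α × β} (w : (sierpinskiProd T₁ T₂ f).Walk x y), y = (c, d) →
      cost T₂ f (P x.1) x.2 d ≤ w.length by
    intro x w; exact H w rfl
  intro x y w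
  induction w with
  | nil =>
    rintro rfl
    have hnil : P c = Walk.nil := (hU c Walk.nil Walk.IsPath.nil).symm
    simp [hnil, T₂.dist_self]
  | cons hadj w ih =>
    rintro rfl
    have h1 := lipschitz (f := f) h2 hP hU d hadj.symm
    have h2' := ih rfl
    simp only [Walk.length_cons]
    omega

lemma dist_eq_cost (h2 : T₂.Connected)
    (hP : ∀ a, (P a).IsPath) (hU : ∀ a (q : T₁.Walk a c), q.IsPath → q = P a)
    (a : α) (b d : β) :
    (sierpinskiProd T₁ T₂ f).dist (a, b) (c, d) = cost T₂ f (P a) b d := by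
  obtain ⟨W, hW⟩ := exists_walk_cost (f := f) h2 (P a) b d
  refine le_antisymm (hW ▸ dist_le W) ?_
  obtain ⟨w, hw⟩ := (Reachable.exists_walk_length_eq_dist ⟨W⟩)
  rw [← hw]
  exact cost_le_walk_length h2 hP hU d w

end Target

end SierpinskiAux

open SierpinskiAux

theorem sierpinskiProd_trees_dim_upper_bound {α β : Type*} [Fintype α] [Fintype β]
    (T₁ : SimpleGraph α) (T₂ : SimpleGraph β) (h1 : T₁.IsTree) (h2 : T₂.IsTree)
    (hcard : 3 ≤ Fintype.card β) (f : α → β) :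
    metricDim (sierpinskiProd T₁ T₂ f) ≤ Fintype.card α * metricDim T₂ := by
  classical
  have h2conn : T₂.Connected := h2.isConnected
  -- obtain a minimum resolving set `S₂` of `T₂`
  have huniv : IsResolvingSet T₂ Set.univ := by
    intro u v h
    have := h u (Set.mem_univ u)
    rw [T₂.dist_self] at this
    exact (h2conn.dist_eq_zero_iff.mp this.symm).symm
  have hne : {n | ∃ S : Set β, S.ncard = n ∧ IsResolvingSet T₂ S}.Nonempty :=
    ⟨(Set.univ : Set β).ncard, ⟨Set.univ, rfl, huniv⟩⟩
  obtain ⟨S₂, hS₂card, hS₂res⟩ : ∃ S : Set β, S.ncard = metricDim T₂ ∧ IsResolvingSet T₂ S :=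
    Nat.sInf_mem hne
  -- `S₂` is nonempty
  obtain ⟨b₀, b₁, hb01⟩ := Fintype.exists_pair_of_one_lt_card (by omega : 1 < Fintype.card β)
  obtain ⟨w₀, hw₀⟩ : S₂.Nonempty := by
    rcases S₂.eq_empty_or_nonempty with hS | hS
    · exact absurd (hS₂res b₀ b₁ (by simp [hS])) hb01
    · exact hS
  -- the unique-path system in `T₁`
  choose P hP hU using fun (c a : α) => h1.existsUnique_path a c
  have hdist : ∀ (a : α) (b : β) (c : α) (d : β),
      (sierpinskiProd T₁ T₂ f).dist (a, b) (c, d) = cost T₂ f (P c a) b d :=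
    fun a b c d => dist_eq_cost h2conn (hP c) (hU c) a b d
  have hnil : ∀ c : α, P c c = Walk.nil := fun c => (hU c c Walk.nil Walk.IsPath.nil).symm
  -- the resolving set of the product
  set S : Set (α × β) := (Set.univ : Set α) ×ˢ S₂ with hSdef
  have hres : IsResolvingSet (sierpinskiProd T₁ T₂ f) S := by
    rintro ⟨g, h⟩ ⟨g', h'⟩ huv
    by_cases hgg : g = g'
    · subst hgg
      have : h = h' := by
        apply hS₂res
        intro w hw
        have := huv (g, w) ⟨Set.mem_univ g, hw⟩
        rwa [hdist, hdist, hnil, cost_nil, cost_nil] at this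
      rw [this]
    · exfalso
      -- `E1`: distances to landmarks in the copy of `g`
      have E1 : ∀ w ∈ S₂, T₂.dist h w = cost T₂ f (P g g') h' w := by
        intro w hw
        have := huv (g, w) ⟨Set.mem_univ g, hw⟩
        rwa [hdist, hdist, hnil, cost_nil] at this
      -- `E2`: distances to landmarks in the copy of `g'`
      have hrev : (P g g').reverse = P g' g := hU g' g _ ((hP g g').reverse)
      have E2 : ∀ w ∈ S₂, cost T₂ f (P g g').reverse h w = T₂.dist h' w := by
        intro w hw
        have := huv (g', w) ⟨Set.mem_univ g', hw⟩
        rwa [hdist, hdist, hnil, cost_nil, ← hrev] at this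
      cases hQ : P g g' with
      | nil => exact absurd rfl hgg
      | cons adj q =>
        obtain ⟨s, e, C, C', hC, hC', hcost, hcostrev⟩ := claimA (f := f) q adj
        have k1 := E1 w₀ hw₀
        have k2 := E2 w₀ hw₀
        rw [hQ, hcost] at k1
        rw [hQ, hcostrev] at k2
        have t1 : T₂.dist h w₀ ≤ T₂.dist h e + T₂.dist e w₀ := h2conn.dist_triangle
        have t2 : T₂.dist h' w₀ ≤ T₂.dist h' s + T₂.dist s w₀ := h2conn.dist_triangle
        omega
  -- cardinality computation
  have hcardS : S.ncard = Fintype.card α * metricDim T₂ := by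
    rw [← hS₂card, hSdef, ← Nat.card_coe_set_eq, ← Nat.card_coe_set_eq,
      Nat.card_congr (Equiv.Set.prod _ _), Nat.card_prod,
      Nat.card_congr (Equiv.Set.univ α), Nat.card_eq_fintype_card]
  exact hcardS ▸ Nat.sInf_le ⟨S, rfl, hres⟩
end

section
/- If w is a fixed vertex of a tree T₂ (with at least 3 vertices) that is a branch vertex (degree at least 3), and f_w : V(T₁) → V(T₂) is the constant function with value w, then dim(T₁ ⊗_{f_w} T₂) = n(T₁)·dim(T₂) for every tree T₁. -/
open SimpleGraph

section TreeLemmas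

variable {V : Type*} {G : SimpleGraph V}

lemma tree_path_length_eq_dist (hG : G.IsTree) {u v : V} (p : G.Walk u v) (hp : p.IsPath) :
    p.length = G.dist u v := by
  obtain ⟨q, hq, hql⟩ := hG.isConnected.exists_path_of_dist u v
  have := (hG.existsUnique_path u v).unique hp hq
  rw [this, hql]

lemma tree_dist_add_of_mem_support (hG : G.IsTree) {u v x : V} (p : G.Walk u v)
    (hp : p.IsPath) (hx : x ∈ p.support) : G.dist u v = G.dist u x + G.dist x v := by
  classical
  have h1 := tree_path_length_eq_dist hG _ (hp.takeUntil hx)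
  have h2 := tree_path_length_eq_dist hG _ (hp.dropUntil hx)
  have h3 := tree_path_length_eq_dist hG p hp
  have h4 : (p.takeUntil x hx).length + (p.dropUntil x hx).length = p.length := by
    rw [← Walk.length_append, Walk.take_spec]
  omega

/-- MEM: distance additivity gives a path through the midpoint. -/
lemma tree_exists_path_through (hG : G.IsTree) {u v x : V}
    (h : G.dist u v = G.dist u x + G.dist x v) :
    ∃ p : G.Walk u v, p.IsPath ∧ x ∈ p.support := by
  obtain ⟨p₁, hp₁, hl₁⟩ := hG.isConnected.exists_path_of_dist u x
  obtain ⟨p₂, hp₂, hl₂⟩ := hG.isConnected.exists_path_of_dist x v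
  refine ⟨p₁.append p₂, ?_, ?_⟩
  · exact (p₁.append p₂).isPath_of_length_eq_dist (by rw [Walk.length_append, hl₁, hl₂, h])
  · rw [Walk.mem_support_append_iff]
    exact Or.inl (Walk.end_mem_support p₁)

/-- POS': ordering of two points on the geodesic between `x` and `y`. -/
lemma tree_pos (hG : G.IsTree) {x y p q : V}
    (hp : G.dist x y = G.dist x p + G.dist p y)
    (hq : G.dist x y = G.dist x q + G.dist q y)
    (hle : G.dist x p ≤ G.dist x q) :
    G.dist x q = G.dist x p + G.dist p q ∧ G.dist p y = G.dist p q + G.dist q y := by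
  obtain ⟨P, hP, hxP⟩ := tree_exists_path_through hG hp
  obtain ⟨Q, hQ, hxQ⟩ := tree_exists_path_through hG hq
  have hPQ : P = Q := ((hG.existsUnique_path x y).unique hP hQ)
  subst hPQ
  -- q is on P; split P at p
  obtain ⟨p₁, hp₁, hl₁⟩ := hG.isConnected.exists_path_of_dist x p
  obtain ⟨p₂, hp₂, hl₂⟩ := hG.isConnected.exists_path_of_dist p y
  have hpath : (p₁.append p₂).IsPath :=
    (p₁.append p₂).isPath_of_length_eq_dist (by rw [Walk.length_append, hl₁, hl₂, hp])
  have hPeq : P = p₁.append p₂ := (hG.existsUnique_path x y).unique hP hpath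
  rw [hPeq, Walk.mem_support_append_iff] at hxQ
  rcases hxQ with hq1 | hq2
  · have h1 := tree_dist_add_of_mem_support hG p₁ hp₁ hq1
    have hqp : G.dist q p = 0 := by omega
    have : q = p := (hG.isConnected.dist_eq_zero_iff).1 hqp
    subst this
    constructor <;> omega
  · have h2 := tree_dist_add_of_mem_support hG p₂ hp₂ hq2
    have hcm : G.dist x q ≤ G.dist x p + G.dist p q := hG.isConnected.dist_triangle
    constructor <;> omega
variable {V : Type*} {G : SimpleGraph V}

lemma adj_dist_one (hG : G.IsTree) {u v : V} (h : G.Adj u v) : G.dist u v = 1 :=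
  dist_eq_one_iff_adj.2 h

/-- Gate existence: first step of the geodesic. -/
lemma tree_gate (hG : G.IsTree) {w v : V} (hne : w ≠ v) :
    ∃ z, G.Adj w z ∧ G.dist w v = 1 + G.dist z v := by
  obtain ⟨p, hp, hl⟩ := hG.isConnected.exists_path_of_dist w v
  cases p with
  | nil => exact absurd rfl hne
  | cons h q =>
    refine ⟨_, h, ?_⟩
    rw [← hl]
    have := tree_path_length_eq_dist hG q hp.of_cons
    simp [Walk.length_cons, this]
    omega

/-- Gate uniqueness. -/
lemma tree_gate_unique (hG : G.IsTree) {w a x z : V} (hx : G.Adj w x) (hz : G.Adj w z)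
    (hdx : G.dist w a = 1 + G.dist x a) (hdz : G.dist w a = 1 + G.dist z a) : x = z := by
  obtain ⟨px, hpx, hlx⟩ := hG.isConnected.exists_path_of_dist x a
  obtain ⟨pz, hpz, hlz⟩ := hG.isConnected.exists_path_of_dist z a
  have hwx : w ∉ px.support := by
    intro hmem
    have := tree_dist_add_of_mem_support hG px hpx hmem
    have h1 : G.dist x w = 1 := adj_dist_one hG hx.symm
    omega
  have hwz : w ∉ pz.support := by
    intro hmem
    have := tree_dist_add_of_mem_support hG pz hpz hmem
    have h1 : G.dist z w = 1 := adj_dist_one hG hz.symm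
    omega
  have hx' : (px.cons hx).IsPath := hpx.cons hwx
  have hz' : (pz.cons hz).IsPath := hpz.cons hwz
  have := (hG.existsUnique_path w a).unique hx' hz'
  have h1 : (px.cons hx).getVert 1 = x := (Walk.getVert_cons_succ (n := 0) _ _).trans (Walk.getVert_zero _)
  have h2 : (pz.cons hz).getVert 1 = z := (Walk.getVert_cons_succ (n := 0) _ _).trans (Walk.getVert_zero _)
  rw [this] at h1
  rw [h1] at h2
  exact h2

/-- Neighbor dichotomy in a tree. -/
lemma tree_adj_dist (hG : G.IsTree) {w x a : V} (h : G.Adj w x) :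
    G.dist x a = G.dist w a + 1 ∨ G.dist w a = G.dist x a + 1 := by
  obtain ⟨p, hp, hl⟩ := hG.isConnected.exists_path_of_dist x a
  by_cases hmem : w ∈ p.support
  · left
    have := tree_dist_add_of_mem_support hG p hp hmem
    have h1 : G.dist x w = 1 := adj_dist_one hG h.symm
    omega
  · right
    have hx' : (p.cons h).IsPath := hp.cons hmem
    have := tree_path_length_eq_dist hG _ hx'
    simp [Walk.length_cons, hl] at this
    omega
variable {V : Type*} {G : SimpleGraph V}

lemma walk_getVert_one_mem_support {u v : V} (p : G.Walk u v) (h : ¬ p.Nil) :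
    p.getVert 1 ∈ p.support := by
  cases p with
  | nil => simp at h
  | cons h q =>
    rw [Walk.getVert_cons_succ, Walk.getVert_zero, Walk.support_cons]
    exact List.mem_cons_of_mem _ q.start_mem_support

lemma walk_getVert_one_append {u v x : V} (p : G.Walk u v) (q : G.Walk v x)
    (h : 1 ≤ p.length) : (p.append q).getVert 1 = p.getVert 1 := by
  rw [Walk.getVert_append]
  rcases Nat.lt_or_ge 1 p.length with h1 | h1
  · simp [h1]
  · have hp1 : p.length = 1 := le_antisymm h1 h
    rw [if_neg (by omega), hp1]
    have := p.getVert_length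
    rw [hp1] at this
    rw [this, q.getVert_zero]
lemma tree_median_aux (hG : G.IsTree) :
    ∀ n u v a : _, G.dist u v = n →
    ∃ m, G.dist u v = G.dist u m + G.dist m v ∧ G.dist u a = G.dist u m + G.dist m a ∧
      G.dist v a = G.dist v m + G.dist m a := by
  classical
  intro n
  induction n using Nat.strong_induction_on with
  | _ n ih =>
  intro u v a hn
  obtain ⟨pva, hpva, hlva⟩ := hG.isConnected.exists_path_of_dist v a
  by_cases hmem : u ∈ pva.support
  · exact ⟨u, by simp, by simp, tree_dist_add_of_mem_support hG pva hpva hmem⟩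
  · have huv : u ≠ v := fun h => hmem (h ▸ pva.start_mem_support)
    have hua : u ≠ a := fun h => hmem (h ▸ pva.end_mem_support)
    obtain ⟨pv, hpv, hlv⟩ := hG.isConnected.exists_path_of_dist u v
    obtain ⟨pa, hpa, hla⟩ := hG.isConnected.exists_path_of_dist u a
    have hdv : 0 < G.dist u v := hG.isConnected.pos_dist_of_ne huv
    have hda : 0 < G.dist u a := hG.isConnected.pos_dist_of_ne hua
    have hpvnil : ¬ pv.Nil := by rw [Walk.not_nil_iff_lt_length, hlv]; exact hdv
    have hpanil : ¬ pa.Nil := by rw [Walk.not_nil_iff_lt_length, hla]; exact hda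
    by_cases hzz : pa.getVert 1 = pv.getVert 1
    · set z := pv.getVert 1 with hz
      have hzv : z ∈ pv.support := walk_getVert_one_mem_support pv hpvnil
      have hza : z ∈ pa.support := hzz ▸ walk_getVert_one_mem_support pa hpanil
      have haduz : G.dist u z = 1 := adj_dist_one hG (Walk.adj_snd hpvnil)
      have h1 : G.dist u v = G.dist u z + G.dist z v :=
        tree_dist_add_of_mem_support hG pv hpv hzv
      have h2 : G.dist u a = G.dist u z + G.dist z a :=
        tree_dist_add_of_mem_support hG pa hpa hza
      have hlt : G.dist z v < n := by omega
      obtain ⟨m, hm1, hm2, hm3⟩ := ih _ hlt z v a rfl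
      have t1 : G.dist u m ≤ G.dist u z + G.dist z m := hG.isConnected.dist_triangle
      have t2 : G.dist u v ≤ G.dist u m + G.dist m v := hG.isConnected.dist_triangle
      have t3 : G.dist u a ≤ G.dist u m + G.dist m a := hG.isConnected.dist_triangle
      have t4 : G.dist u a ≥ G.dist u m - G.dist m a := by
        have : G.dist u m ≤ G.dist u a + G.dist a m := hG.isConnected.dist_triangle
        have hc : G.dist a m = G.dist m a := G.dist_comm
        omega
      exact ⟨m, by omega, by omega, hm3⟩
    · refine ⟨u, by simp, by simp, ?_⟩
      have hkey : ∀ y, y ∈ pv.support → y ∈ pa.support → y = u := by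
        intro y hy1 hy2
        by_contra hyu
        have t1 : (pv.takeUntil y hy1).IsPath := hpv.takeUntil hy1
        have t2 : (pa.takeUntil y hy2).IsPath := hpa.takeUntil hy2
        have heq : pv.takeUntil y hy1 = pa.takeUntil y hy2 :=
          (hG.existsUnique_path u y).unique t1 t2
        have hl1 : 1 ≤ (pv.takeUntil y hy1).length := by
          have hh := tree_path_length_eq_dist hG _ t1
          have := hG.isConnected.pos_dist_of_ne (fun h => hyu h.symm)
          omega
        have e1 : pv.getVert 1 = (pv.takeUntil y hy1).getVert 1 := by
          conv_lhs => rw [← Walk.take_spec pv hy1]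
          rw [walk_getVert_one_append _ _ hl1]
        have e2 : pa.getVert 1 = (pa.takeUntil y hy2).getVert 1 := by
          conv_lhs => rw [← Walk.take_spec pa hy2]
          rw [walk_getVert_one_append _ _ (heq ▸ hl1)]
        exact hzz (by rw [e2, ← heq, ← e1])
      have hW : (pv.reverse.append pa).IsPath := by
        rw [Walk.isPath_def, Walk.support_append, List.nodup_append]
        have hcons := pa.support_eq_cons ▸ hpa.support_nodup
        refine ⟨hpv.reverse.support_nodup, (List.nodup_cons.mp hcons).2, ?_⟩
        intro y hy1 y' hy2 hyy'
        subst hyy'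
        rw [Walk.support_reverse, List.mem_reverse] at hy1
        have hyne : y ≠ u := by
          rintro rfl
          exact (List.nodup_cons.mp hcons).1 hy2
        have hy2' : y ∈ pa.support := by
          rw [pa.support_eq_cons]
          exact List.mem_cons_of_mem _ hy2
        exact hyne (hkey y hy1 hy2')
      have hlen := tree_path_length_eq_dist hG _ hW
      rw [Walk.length_append, Walk.length_reverse, hlv, hla] at hlen
      rw [← hlen, G.dist_comm (u := v) (v := u)]
lemma tree_median (hG : G.IsTree) (u v a : V) :
    ∃ m, G.dist u v = G.dist u m + G.dist m v ∧ G.dist u a = G.dist u m + G.dist m a ∧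
      G.dist v a = G.dist v m + G.dist m a :=
  tree_median_aux hG _ u v a rfl

/-- Key claim: if `d(u,a) = d(v,a)` and `d(u,w) < d(v,w)`, then the gate of `w`
towards `v` is also the gate of `w` towards `a`. -/
lemma tree_gate_eq (hG : G.IsTree) {u v w a z : V}
    (hd : G.dist u a = G.dist v a) (hlt : G.dist u w < G.dist v w)
    (hzadj : G.Adj w z) (hgz : G.dist w v = 1 + G.dist z v) :
    G.dist w a = 1 + G.dist z a := by
  obtain ⟨m, hm1, hm2, hm3⟩ := tree_median hG u v a
  obtain ⟨j, hj1, hj2, hj3⟩ := tree_median hG u v w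
  -- commutation facts
  have cwv : G.dist w v = G.dist v w := G.dist_comm
  have cwj : G.dist w j = G.dist j w := G.dist_comm
  have cvj : G.dist v j = G.dist j v := G.dist_comm
  have cvm : G.dist v m = G.dist m v := G.dist_comm
  have cwm : G.dist w m = G.dist m w := G.dist_comm
  have hk : G.dist u m = G.dist v m := by omega
  have hjlt : G.dist u j < G.dist v j := by omega
  have hjm := tree_pos hG (x := u) (y := v) (p := j) (q := m) hj1 hm1 (by omega)
  obtain ⟨o1, o2⟩ := hjm
  have hjm_pos : 0 < G.dist j m := by omega
  -- (i)
  have tri1 : G.dist w m ≤ G.dist w j + G.dist j m := hG.isConnected.dist_triangle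
  have tri2 : G.dist w v ≤ G.dist w m + G.dist m v := hG.isConnected.dist_triangle
  have hi : G.dist w m = G.dist w j + G.dist j m := by omega
  have hi' : G.dist w v = G.dist w m + G.dist m v := by omega
  -- (ii)
  obtain ⟨q, hq1, hq2, hq3⟩ := tree_median hG w v a
  have cvq : G.dist v q = G.dist q v := G.dist_comm
  have cwq : G.dist w q = G.dist q w := G.dist_comm
  have cjq : G.dist j q = G.dist q j := G.dist_comm
  have cmq : G.dist m q = G.dist q m := G.dist_comm
  have hm_vw : G.dist v w = G.dist v m + G.dist m w := by omega
  have hq_vw : G.dist v w = G.dist v q + G.dist q w := by omega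
  have hii : G.dist w a = G.dist w m + G.dist m a := by
    rcases le_or_gt (G.dist v q) (G.dist v m) with hcase | hcase
    · obtain ⟨c1, c2⟩ := tree_pos hG (x := v) (y := a) (p := q) (q := m) hq3 hm3 hcase
      obtain ⟨d1, d2⟩ := tree_pos hG (x := v) (y := w) (p := q) (q := m) hq_vw hm_vw hcase
      have tri3 : G.dist w a ≤ G.dist w m + G.dist m a := hG.isConnected.dist_triangle
      omega
    · obtain ⟨e1, e2⟩ := tree_pos hG (x := v) (y := a) (p := m) (q := q) hm3 hq3 hcase.le
      obtain ⟨f1, f2⟩ := tree_pos hG (x := v) (y := w) (p := m) (q := q) hm_vw hq_vw hcase.le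
      have tri_u1 : G.dist u a ≤ G.dist u q + G.dist q a := hG.isConnected.dist_triangle
      have tri_u2 : G.dist u q ≤ G.dist u j + G.dist j q := hG.isConnected.dist_triangle
      rcases le_or_gt (G.dist v q) (G.dist v j) with hsub | hsub
      · have hj_vw : G.dist v w = G.dist v j + G.dist j w := by omega
        obtain ⟨g1, g2⟩ := tree_pos hG (x := v) (y := w) (p := q) (q := j) hq_vw hj_vw hsub
        omega
      · have hj_vw : G.dist v w = G.dist v j + G.dist j w := by omega
        obtain ⟨g1, g2⟩ := tree_pos hG (x := v) (y := w) (p := j) (q := q) hj_vw hq_vw hsub.le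
        omega
  -- (iii)
  have tri4 : G.dist u w ≤ G.dist u m + G.dist m w := hG.isConnected.dist_triangle
  have tri5 : G.dist u m ≤ G.dist u w + G.dist w m := hG.isConnected.dist_triangle
  have tri6 : G.dist v w ≤ G.dist v m + G.dist m w := hG.isConnected.dist_triangle
  have tri7 : G.dist v m ≤ G.dist v w + G.dist w m := hG.isConnected.dist_triangle
  have hwm_pos : 0 < G.dist w m := by omega
  have hwm_ne : w ≠ m := by
    rintro rfl
    simp [SimpleGraph.dist_self] at hwm_pos
  obtain ⟨z', hz'adj, hz'm⟩ := tree_gate hG hwm_ne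
  have tri8 : G.dist z' v ≤ G.dist z' m + G.dist m v := hG.isConnected.dist_triangle
  have tri9 : G.dist w v ≤ G.dist w z' + G.dist z' v := hG.isConnected.dist_triangle
  have hwz' : G.dist w z' = 1 := adj_dist_one hG hz'adj
  have hz'gate : G.dist w v = 1 + G.dist z' v := by omega
  have hzz' : z = z' := tree_gate_unique hG hzadj hz'adj hgz hz'gate
  subst hzz'
  have tri10 : G.dist z a ≤ G.dist z m + G.dist m a := hG.isConnected.dist_triangle
  have tri11 : G.dist w a ≤ G.dist w z + G.dist z a := hG.isConnected.dist_triangle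
  have hwz : G.dist w z = 1 := adj_dist_one hG hzadj
  omega
/-- A set separating the spheres around a branch vertex of a tree is resolving. -/
lemma tree_sphere_aux [Finite V] (hG : G.IsTree) {w : V} (hw : 3 ≤ (G.neighborSet w).ncard)
    (A : Set V)
    (hsep : ∀ x y : V, G.dist x w = G.dist y w → (∀ a ∈ A, G.dist x a = G.dist y a) → x = y)
    {u v : V} (hlt : G.dist u w < G.dist v w) (hA : ∀ a ∈ A, G.dist u a = G.dist v a) :
    False := by
  have hwv : w ≠ v := by
    rintro rfl
    simp [SimpleGraph.dist_self] at hlt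
  obtain ⟨z, hzadj, hgz⟩ := tree_gate hG hwv
  -- pick two further neighbors of w
  have hfin : (G.neighborSet w \ {z}).Finite := Set.toFinite _
  have hcard : 1 < (G.neighborSet w \ {z}).ncard := by
    have h1 := Set.pred_ncard_le_ncard_diff_singleton (G.neighborSet w) z
    omega
  obtain ⟨x, hx, y, hy, hxy⟩ := (Set.one_lt_ncard hfin).1 hcard
  obtain ⟨hxadj, hxz⟩ := hx
  obtain ⟨hyadj, hyz⟩ := hy
  simp only [Set.mem_singleton_iff] at hxz hyz
  rw [SimpleGraph.mem_neighborSet] at hxadj hyadj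
  have key : ∀ t : V, G.Adj w t → t ≠ z → ∀ a ∈ A, G.dist t a = G.dist w a + 1 := by
    intro t htadj htz a ha
    have hga : G.dist w a = 1 + G.dist z a := tree_gate_eq hG (hA a ha) hlt hzadj hgz
    rcases tree_adj_dist hG htadj with h | h
    · exact h
    · exact absurd (tree_gate_unique hG htadj hzadj (by omega) hga) htz
  have hxw : G.dist x w = 1 := adj_dist_one hG hxadj.symm
  have hyw : G.dist y w = 1 := adj_dist_one hG hyadj.symm
  refine hxy (hsep x y (by rw [hxw, hyw]) ?_)
  intro a ha
  rw [key x hxadj hxz a ha, key y hyadj hyz a ha]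

lemma tree_sphere_resolving [Finite V] (hG : G.IsTree) {w : V}
    (hw : 3 ≤ (G.neighborSet w).ncard) (A : Set V)
    (hsep : ∀ x y : V, G.dist x w = G.dist y w → (∀ a ∈ A, G.dist x a = G.dist y a) → x = y) :
    ∀ u v : V, (∀ a ∈ A, G.dist u a = G.dist v a) → u = v := by
  intro u v hA
  rcases lt_trichotomy (G.dist u w) (G.dist v w) with h | h | h
  · exact absurd (tree_sphere_aux hG hw A hsep h hA) id
  · exact hsep u v h hA
  · exact absurd (tree_sphere_aux hG hw A hsep h (fun a ha => (hA a ha).symm)) id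

end TreeLemmas

section Product

variable {α β : Type*} (T₁ : SimpleGraph α) (T₂ : SimpleGraph β) (w : β)

/-- The copy of `T₂` indexed by `g`. -/
def copyHom (g : α) : T₂ →g sierpinskiProd T₁ T₂ (fun _ => w) where
  toFun h := (g, h)
  map_rel' := fun hadj => Or.inl ⟨rfl, hadj⟩

/-- The copy of `T₁` on the `w`-vertices. -/
def baseHom : T₁ →g sierpinskiProd T₁ T₂ (fun _ => w) where
  toFun g := (g, w)
  map_rel' := fun hadj => Or.inr ⟨hadj, rfl, rfl⟩

variable {T₁ T₂ w}

lemma sp_walk_proj2 (hc2 : T₂.Connected) {p q : α × β}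
    (W : (sierpinskiProd T₁ T₂ (fun _ => w)).Walk p q) :
    T₂.dist p.2 q.2 ≤ W.length := by
  induction W with
  | nil => simp [SimpleGraph.dist_self]
  | @cons p r q h W ih =>
    rcases h with ⟨h1, h2⟩ | ⟨h1, h2, h3⟩
    · have t : T₂.dist p.2 q.2 ≤ T₂.dist p.2 r.2 + T₂.dist r.2 q.2 := hc2.dist_triangle
      have : T₂.dist p.2 r.2 = 1 := dist_eq_one_iff_adj.2 h2
      show _ ≤ W.length + 1
      omega
    · have : p.2 = r.2 := by rw [h2, h3]
      show _ ≤ W.length + 1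
      rw [this]
      omega

lemma sp_walk_proj1 (hc1 : T₁.Connected) {p q : α × β}
    (W : (sierpinskiProd T₁ T₂ (fun _ => w)).Walk p q) :
    T₁.dist p.1 q.1 ≤ W.length := by
  induction W with
  | nil => simp [SimpleGraph.dist_self]
  | @cons p r q h W ih =>
    rcases h with ⟨h1, h2⟩ | ⟨h1, h2, h3⟩
    · show _ ≤ W.length + 1
      rw [h1]
      omega
    · have t : T₁.dist p.1 q.1 ≤ T₁.dist p.1 r.1 + T₁.dist r.1 q.1 := hc1.dist_triangle
      have : T₁.dist p.1 r.1 = 1 := dist_eq_one_iff_adj.2 h1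
      show _ ≤ W.length + 1
      omega

lemma sp_walk_cross (hc1 : T₁.Connected) (hc2 : T₂.Connected) {p q : α × β}
    (W : (sierpinskiProd T₁ T₂ (fun _ => w)).Walk p q) (hne : p.1 ≠ q.1) :
    T₂.dist p.2 w + T₁.dist p.1 q.1 + T₂.dist w q.2 ≤ W.length := by
  induction W with
  | nil => exact absurd rfl hne
  | @cons p r q h W ih =>
    rcases h with ⟨h1, h2⟩ | ⟨h1, h2, h3⟩
    · have hrq : r.1 ≠ q.1 := h1 ▸ hne
      have hih := ih hrq
      have t : T₂.dist p.2 w ≤ T₂.dist p.2 r.2 + T₂.dist r.2 w := hc2.dist_triangle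
      have t2 : T₂.dist p.2 r.2 = 1 := dist_eq_one_iff_adj.2 h2
      show _ ≤ W.length + 1
      rw [h1]
      omega
    · simp only at h2 h3
      by_cases hr : r.1 = q.1
      · have hp2 : T₂.dist p.2 w = 0 := by rw [h2, SimpleGraph.dist_self]
        have h4 : T₂.dist w q.2 ≤ W.length := by
          have := sp_walk_proj2 hc2 W
          rwa [h3] at this
        have t : T₁.dist p.1 q.1 ≤ T₁.dist p.1 r.1 + T₁.dist r.1 q.1 := hc1.dist_triangle
        have t2 : T₁.dist p.1 r.1 = 1 := dist_eq_one_iff_adj.2 h1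
        have t3 : T₁.dist r.1 q.1 = 0 := by rw [hr, SimpleGraph.dist_self]
        show _ ≤ W.length + 1
        omega
      · have hih := ih hr
        have hp2 : T₂.dist p.2 w = 0 := by rw [h2, SimpleGraph.dist_self]
        have hr2 : T₂.dist r.2 w = 0 := by rw [h3, SimpleGraph.dist_self]
        have t : T₁.dist p.1 q.1 ≤ T₁.dist p.1 r.1 + T₁.dist r.1 q.1 := hc1.dist_triangle
        have t2 : T₁.dist p.1 r.1 = 1 := dist_eq_one_iff_adj.2 h1
        show _ ≤ W.length + 1
        omega

lemma sp_walk_exists (hc1 : T₁.Connected) (hc2 : T₂.Connected) (g g' : α) (h h' : β) :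
    ∃ W : (sierpinskiProd T₁ T₂ (fun _ => w)).Walk (g, h) (g', h'),
      W.length = T₂.dist h w + T₁.dist g g' + T₂.dist w h' := by
  obtain ⟨p2, hp2, hl2⟩ := hc2.exists_path_of_dist h w
  obtain ⟨p1, hp1, hl1⟩ := hc1.exists_path_of_dist g g'
  obtain ⟨p3, hp3, hl3⟩ := hc2.exists_path_of_dist w h'
  obtain ⟨W1, l1⟩ : ∃ W : (sierpinskiProd T₁ T₂ (fun _ => w)).Walk (g, h) (g, w),
      W.length = T₂.dist h w := ⟨p2.map (copyHom T₁ T₂ w g), (Walk.length_map _ _).trans hl2⟩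
  obtain ⟨W2, l2⟩ : ∃ W : (sierpinskiProd T₁ T₂ (fun _ => w)).Walk (g, w) (g', w),
      W.length = T₁.dist g g' := ⟨p1.map (baseHom T₁ T₂ w), (Walk.length_map _ _).trans hl1⟩
  obtain ⟨W3, l3⟩ : ∃ W : (sierpinskiProd T₁ T₂ (fun _ => w)).Walk (g', w) (g', h'),
      W.length = T₂.dist w h' := ⟨p3.map (copyHom T₁ T₂ w g'), (Walk.length_map _ _).trans hl3⟩
  refine ⟨W1.append (W2.append W3), ?_⟩
  rw [Walk.length_append, Walk.length_append, l1, l2, l3]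
  omega

lemma sp_connected (hc1 : T₁.Connected) (hc2 : T₂.Connected) :
    (sierpinskiProd T₁ T₂ (fun _ => w)).Connected := by
  have hn : Nonempty (α × β) := ⟨⟨hc1.nonempty.some, hc2.nonempty.some⟩⟩
  refine Connected.mk ?_
  intro p q
  obtain ⟨W, -⟩ := sp_walk_exists (w := w) hc1 hc2 p.1 q.1 p.2 q.2
  exact ⟨W⟩

lemma sp_dist_cross (hc1 : T₁.Connected) (hc2 : T₂.Connected) {g g' : α} (h h' : β)
    (hne : g ≠ g') :
    (sierpinskiProd T₁ T₂ (fun _ => w)).dist (g, h) (g', h') =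
      T₂.dist h w + T₁.dist g g' + T₂.dist w h' := by
  apply le_antisymm
  · obtain ⟨W, hW⟩ := sp_walk_exists (w := w) hc1 hc2 g g' h h'
    exact hW ▸ SimpleGraph.dist_le W
  · obtain ⟨W, hW⟩ := (sp_connected hc1 hc2).exists_walk_length_eq_dist (g, h) (g', h')
    have := sp_walk_cross (w := w) hc1 hc2 W hne
    simp only [Prod.fst, Prod.snd] at this
    omega

lemma sp_dist_copy (hc1 : T₁.Connected) (hc2 : T₂.Connected) (g : α) (h h' : β) :
    (sierpinskiProd T₁ T₂ (fun _ => w)).dist (g, h) (g, h') = T₂.dist h h' := by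
  apply le_antisymm
  · obtain ⟨p2, hp2, hl2⟩ := hc2.exists_path_of_dist h h'
    have := SimpleGraph.dist_le (p2.map (copyHom T₁ T₂ w g))
    rwa [Walk.length_map, hl2] at this
  · obtain ⟨W, hW⟩ := (sp_connected hc1 hc2).exists_walk_length_eq_dist (g, h) (g, h')
    have := sp_walk_proj2 (w := w) hc2 W
    simp only [Prod.fst, Prod.snd] at this
    omega

end Product

lemma univ_resolving {V : Type*} {G : SimpleGraph V} (hc : G.Connected) :
    IsResolvingSet G Set.univ := by
  intro u v h
  have := h u (Set.mem_univ u)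
  rw [SimpleGraph.dist_self] at this
  exact ((hc.dist_eq_zero_iff).1 this.symm).symm


theorem sierpinskiProd_const_branch_dim {α β : Type*} [Fintype α] [Fintype β]
    (T₁ : SimpleGraph α) (T₂ : SimpleGraph β) (h1 : T₁.IsTree) (h2 : T₂.IsTree)
    (hcard : 3 ≤ Fintype.card β) (w : β) (hw : 3 ≤ (T₂.neighborSet w).ncard) :
    metricDim (sierpinskiProd T₁ T₂ (fun _ => w)) = Fintype.card α * metricDim T₂ := by
  classical
  have hc1 : T₁.Connected := h1.isConnected
  have hc2 : T₂.Connected := h2.isConnected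
  set P := sierpinskiProd T₁ T₂ (fun _ => w) with hP
  have hPc : P.Connected := sp_connected hc1 hc2
  -- the defining sets
  set R₂ : Set ℕ := {n | ∃ S : Set β, S.ncard = n ∧ IsResolvingSet T₂ S} with hR₂
  set RP : Set ℕ := {n | ∃ S : Set (α × β), S.ncard = n ∧ IsResolvingSet P S} with hRP
  have hR₂ne : R₂.Nonempty := ⟨_, Set.univ, rfl, univ_resolving hc2⟩
  have hRPne : RP.Nonempty := ⟨_, Set.univ, rfl, univ_resolving hPc⟩
  obtain ⟨S₀, hS₀card, hS₀res⟩ : ∃ S : Set β, S.ncard = metricDim T₂ ∧ IsResolvingSet T₂ S := by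
    have := Nat.sInf_mem hR₂ne
    obtain ⟨S, hS1, hS2⟩ := this
    exact ⟨S, hS1, hS2⟩
  have hdimpos : 0 < metricDim T₂ := by
    rcases Nat.eq_zero_or_pos (metricDim T₂) with h | h
    · exfalso
      have hS₀empty : S₀ = ∅ := by
        rw [← Set.ncard_eq_zero (Set.toFinite S₀), hS₀card, h]
      obtain ⟨x, y, hxy⟩ := Fintype.exists_pair_of_one_lt_card (by omega) (α := β)
      exact hxy (hS₀res x y (by simp [hS₀empty]))
    · exact h
  have hS₀ne : S₀.Nonempty := Set.nonempty_of_ncard_ne_zero (by omega)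
  apply le_antisymm
  · -- upper bound
    set S : Set (α × β) := (Set.univ : Set α) ×ˢ S₀ with hS
    have hcardS : S.ncard = Fintype.card α * metricDim T₂ := by
      rw [← hS₀card, ← Nat.card_coe_set_eq, ← Nat.card_coe_set_eq]
      rw [Nat.card_congr (Equiv.Set.prod _ _), Nat.card_prod]
      congr 1
      rw [Nat.card_congr (Equiv.Set.univ α), Nat.card_eq_fintype_card]
    have hresS : IsResolvingSet P S := by
      rintro ⟨g, h⟩ ⟨g', h'⟩ hyp
      rcases eq_or_ne g g' with rfl | hne
      · have : h = h' := by
          apply hS₀res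
          intro s hs
          have := hyp (g, s) (by simp [hS, hs])
          rwa [sp_dist_copy hc1 hc2, sp_dist_copy hc1 hc2] at this
        rw [this]
      · exfalso
        obtain ⟨s₀, hs₀⟩ := hS₀ne
        have e1 := hyp (g, s₀) (by simp [hS, hs₀])
        have e2 := hyp (g', s₀) (by simp [hS, hs₀])
        rw [sp_dist_copy hc1 hc2, sp_dist_cross hc1 hc2 _ _ hne.symm] at e1
        rw [sp_dist_cross hc1 hc2 _ _ hne, sp_dist_copy hc1 hc2] at e2
        have t1 : T₂.dist h s₀ ≤ T₂.dist h w + T₂.dist w s₀ := hc2.dist_triangle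
        have t2 : T₂.dist h' s₀ ≤ T₂.dist h' w + T₂.dist w s₀ := hc2.dist_triangle
        have t3 : 0 < T₁.dist g g' := hc1.pos_dist_of_ne hne
        have t4 : T₁.dist g g' = T₁.dist g' g := SimpleGraph.dist_comm
        omega
    exact Nat.sInf_le ⟨S, hcardS, hresS⟩
  · -- lower bound
    refine le_csInf hRPne ?_
    rintro n ⟨S, hcardS, hresS⟩
    set A : α → Set β := fun g => {h | (g, h) ∈ S} with hA
    have hDg : ∀ g, metricDim T₂ ≤ (A g).ncard := by
      intro g
      have hsep : ∀ x y : β, T₂.dist x w = T₂.dist y w →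
          (∀ a ∈ A g, T₂.dist x a = T₂.dist y a) → x = y := by
        intro x y hxw hAg
        have : (g, x) = (g, y) := by
          apply hresS
          rintro ⟨g'', b⟩ hb
          rcases eq_or_ne g g'' with rfl | hne
          · rw [sp_dist_copy hc1 hc2, sp_dist_copy hc1 hc2]
            exact hAg b hb
          · rw [sp_dist_cross hc1 hc2 _ _ hne, sp_dist_cross hc1 hc2 _ _ hne, hxw]
        simpa using this
      have hres : IsResolvingSet T₂ (A g) := tree_sphere_resolving h2 hw (A g) hsep
      exact Nat.sInf_le ⟨A g, rfl, hres⟩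
    -- summation
    have hsum : S.ncard = ∑ g : α, (A g).ncard := by
      have hfin : S.Finite := Set.toFinite S
      rw [Set.ncard_eq_toFinset_card']
      rw [Finset.card_eq_sum_card_fiberwise (f := Prod.fst) (t := Finset.univ)
        (fun x _ => Finset.mem_univ _)]
      apply Finset.sum_congr rfl
      intro g _
      rw [Set.ncard_eq_toFinset_card']
      apply Finset.card_bij (fun p _ => p.2)
      · rintro ⟨ga, b⟩ hb
        simp only [Finset.mem_filter, Set.mem_toFinset] at hb
        obtain ⟨hb1, hb2⟩ := hb
        simp only [Set.mem_toFinset, hA, Set.mem_setOf_eq]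
        cases hb2
        exact hb1
      · rintro ⟨ga, b⟩ hb ⟨ga', b'⟩ hb' hbb
        simp only [Finset.mem_filter, Set.mem_toFinset] at hb hb'
        simp only at hbb
        cases hb.2
        cases hb'.2
        rw [hbb]
      · intro b hb
        simp only [Set.mem_toFinset, hA, Set.mem_setOf_eq] at hb
        exact ⟨(g, b), by simp [hb], rfl⟩
    rw [hcardS] at hsum
    rw [hsum]
    calc Fintype.card α * metricDim T₂ = ∑ _g : α, metricDim T₂ := by
          rw [Finset.sum_const, Finset.card_univ, smul_eq_mul]
      _ ≤ ∑ g : α, (A g).ncard := Finset.sum_le_sum (fun g _ => hDg g)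
end

section
/- If P_n is a path with n ≥ 2 vertices and P_m is a path with m ≥ 2 vertices with endpoints x and y, and f : V(P_n) → V(P_m) is defined on the vertices v₁,...,v_n of P_n by f(v_i) = x if i mod 4 ∈ {1,2} and f(v_i) = y otherwise, then P_n ⊗_f P_m is isomorphic to the path P_{nm}. -/
open SimpleGraph

private lemma sier_aux_bound {n m i x : ℕ} (hi : i < n) (hx : x < m) : i * m + x < n * m := by
  have h : (i + 1) * m ≤ n * m := Nat.mul_le_mul_right m (by omega)
  rw [add_mul, one_mul] at h; omega

private lemma sier_aux_eq {m i i' x y : ℕ} (hx : x < m) (hy : y < m)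
    (h : i * m + x = i' * m + y) : i = i' ∧ x = y := by
  have hii : i = i' := by
    rcases lt_trichotomy i i' with h1 | h1 | h1
    · have h2 : (i + 1) * m ≤ i' * m := Nat.mul_le_mul_right m (by omega)
      rw [add_mul, one_mul] at h2; omega
    · exact h1
    · have h2 : (i' + 1) * m ≤ i * m := Nat.mul_le_mul_right m (by omega)
      rw [add_mul, one_mul] at h2; omega
  subst hii; omega

private lemma sier_aux_succ {m i i' x y : ℕ} (hx : x < m) (hy : y < m) :
    i * m + x + 1 = i' * m + y ↔ (i = i' ∧ x + 1 = y) ∨ (i' = i + 1 ∧ x = m - 1 ∧ y = 0) := by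
  constructor
  · intro h
    have hle : i ≤ i' := by
      by_contra hc
      have h2 : (i' + 1) * m ≤ i * m := Nat.mul_le_mul_right m (by omega)
      rw [add_mul, one_mul] at h2; omega
    have hle2 : i' ≤ i + 1 := by
      by_contra hc
      have h2 : (i + 2) * m ≤ i' * m := Nat.mul_le_mul_right m (by omega)
      rw [add_mul] at h2; omega
    rcases (by omega : i' = i ∨ i' = i + 1) with h' | h'
    · subst h'; exact Or.inl ⟨rfl, by omega⟩
    · subst h'
      rw [add_mul, one_mul] at h
      exact Or.inr ⟨rfl, by omega, by omega⟩
  · rintro (⟨rfl, h⟩ | ⟨rfl, h1, h2⟩)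
    · omega
    · rw [add_mul, one_mul]; omega

set_option maxHeartbeats 1000000 in
theorem sierpinskiProd_paths_isomorphic_path (n m : ℕ) (hn : 2 ≤ n) (hm : 2 ≤ m) :
    Nonempty (sierpinskiProd (pathGraph n) (pathGraph m)
        (fun i => if i.val % 4 = 0 ∨ i.val % 4 = 1 then (⟨0, by omega⟩ : Fin m)
          else ⟨m - 1, by omega⟩) ≃g
      pathGraph (n * m)) := by
  set F : Fin n × Fin m → Fin (n * m) := fun p =>
    ⟨p.1.val * m + (if p.1.val % 4 = 1 ∨ p.1.val % 4 = 2 then p.2.val else m - 1 - p.2.val),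
      sier_aux_bound p.1.isLt (by have := p.2.isLt; split <;> omega)⟩ with hF
  have hinj : Function.Injective F := by
    intro p q h
    have h' : p.1.val * m + (if p.1.val % 4 = 1 ∨ p.1.val % 4 = 2 then p.2.val
          else m - 1 - p.2.val)
        = q.1.val * m + (if q.1.val % 4 = 1 ∨ q.1.val % 4 = 2 then q.2.val
          else m - 1 - q.2.val) := congrArg Fin.val h
    have h2m := p.2.isLt
    have h2m' := q.2.isLt
    obtain ⟨h1, h2⟩ := sier_aux_eq (by split <;> omega) (by split <;> omega) h'
    have hfst : p.1 = q.1 := Fin.ext h1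
    have hsnd : p.2 = q.2 := by
      apply Fin.ext
      rw [h1] at h2
      split_ifs at h2 <;> omega
    exact Prod.ext hfst hsnd
  have hbij : Function.Bijective F :=
    (Fintype.bijective_iff_injective_and_card F).2 ⟨hinj, by simp⟩
  refine ⟨⟨Equiv.ofBijective F hbij, ?_⟩⟩
  intro p q
  show (pathGraph (n * m)).Adj (F p) (F q) ↔ _
  have h2m := p.2.isLt
  have h2m' := q.2.isLt
  rw [pathGraph_adj]
  show (p.1.val * m + _ + 1 = q.1.val * m + _ ∨ q.1.val * m + _ + 1 = p.1.val * m + _) ↔ _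
  have hxp : (if p.1.val % 4 = 1 ∨ p.1.val % 4 = 2 then p.2.val else m - 1 - p.2.val) < m := by
    split <;> omega
  have hxq : (if q.1.val % 4 = 1 ∨ q.1.val % 4 = 2 then q.2.val else m - 1 - q.2.val) < m := by
    split <;> omega
  rw [sier_aux_succ hxp hxq, sier_aux_succ hxq hxp]
  show _ ↔ (p.1 = q.1 ∧ (pathGraph m).Adj p.2 q.2) ∨
      ((pathGraph n).Adj p.1 q.1 ∧ p.2 = _ ∧ q.2 = _)
  rw [pathGraph_adj, pathGraph_adj]
  simp only [Fin.ext_iff, apply_ite Fin.val]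
  rcases (by omega : p.1.val % 4 = 0 ∨ p.1.val % 4 = 1 ∨ p.1.val % 4 = 2 ∨ p.1.val % 4 = 3)
      with hp | hp | hp | hp <;>
    rcases (by omega : q.1.val % 4 = 0 ∨ q.1.val % 4 = 1 ∨ q.1.val % 4 = 2 ∨ q.1.val % 4 = 3)
      with hq | hq | hq | hq <;>
    simp only [hp, hq] <;> first | omega | (norm_num <;> omega) | norm_num
end

section
/- For n ≥ 3, the upper Sierpiński metric dimension Dim_S(C_n, C_3) = n, where C_k denotes the cycle on k vertices. -/
open SimpleGraph

/-- key local distance lemma -/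
lemma dist_nbhd {V : Type*} {G : SimpleGraph V} (hc : G.Connected) {x p q s : V}
    (hx : ∀ y, G.Adj x y ↔ y = p ∨ y = q) (hs : s ≠ x) :
    G.dist x s = 1 + min (G.dist p s) (G.dist q s) := by
  have hap : G.Adj x p := (hx p).mpr (Or.inl rfl)
  have haq : G.Adj x q := (hx q).mpr (Or.inr rfl)
  have h1 : G.dist x s ≤ 1 + G.dist p s := by
    have ht := hc.dist_triangle (u := x) (v := p) (w := s)
    rwa [dist_eq_one_iff_adj.mpr hap] at ht
  have h2 : G.dist x s ≤ 1 + G.dist q s := by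
    have ht := hc.dist_triangle (u := x) (v := q) (w := s)
    rwa [dist_eq_one_iff_adj.mpr haq] at ht
  refine le_antisymm (by omega) ?_
  obtain ⟨w, hw⟩ := (hc.preconnected x s).exists_walk_length_eq_dist
  cases w with
  | nil => exact absurd rfl hs
  | cons ha w' =>
    rw [Walk.length_cons] at hw
    rcases (hx _).mp ha with h | h
    · have hd := dist_le w'
      subst h
      omega
    · have hd := dist_le w'
      subst h
      omega

def SP (m : ℕ) (f : Fin (m+3) → Fin 3) : SimpleGraph (Fin (m+3) × Fin 3) :=
  sierpinskiProd (cycleGraph (m+3)) (cycleGraph 3) f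

lemma SP_adj {m : ℕ} {f : Fin (m+3) → Fin 3} {p q : Fin (m+3) × Fin 3} :
    (SP m f).Adj p q ↔
      (p.1 = q.1 ∧ (cycleGraph 3).Adj p.2 q.2) ∨
      ((cycleGraph (m+3)).Adj p.1 q.1 ∧ p.2 = f q.1 ∧ q.2 = f p.1) := Iff.rfl

lemma H3_adj : ∀ a b : Fin 3, (cycleGraph 3).Adj a b ↔ a ≠ b := by decide

lemma G_adj_succ {m : ℕ} (g : Fin (m+3)) : (cycleGraph (m+3)).Adj g (g+1) :=
  (@cycleGraph_adj (m+1) g (g+1)).mpr (Or.inr (add_sub_cancel_left g 1))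

lemma G_adj_pred {m : ℕ} (g : Fin (m+3)) : (cycleGraph (m+3)).Adj g (g-1) :=
  (@cycleGraph_adj (m+1) g (g-1)).mpr (Or.inl (sub_sub_cancel g 1))

lemma G_adj_char {m : ℕ} {g z : Fin (m+3)} (h : (cycleGraph (m+3)).Adj g z) :
    z = g + 1 ∨ z = g - 1 := by
  rcases (@cycleGraph_adj (m+1) g z).mp h with h | h
  · right
    have : g = 1 + z := sub_eq_iff_eq_add.mp h
    rw [this, add_comm 1 z, add_sub_cancel_right]
  · left
    have : z = 1 + g := sub_eq_iff_eq_add.mp h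
    exact this.trans (add_comm 1 g)

open Fin.NatCast in
lemma SP_conn (m : ℕ) (f : Fin (m+3) → Fin 3) : (SP m f).Connected := by
  have intra : ∀ (g : Fin (m+3)) (h h' : Fin 3), (SP m f).Reachable (g,h) (g,h') := by
    intro g h h'
    by_cases he : h = h'
    · rw [he]
    · exact (Adj.reachable (Or.inl ⟨rfl, (H3_adj h h').mpr he⟩))
  have step : ∀ (g : Fin (m+3)) (h h' : Fin 3), (SP m f).Reachable (g,h) (g+1,h') := by
    intro g h h'
    refine (intra g h (f (g+1))).trans (Reachable.trans ?_ (intra (g+1) (f g) h'))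
    exact Adj.reachable (Or.inr ⟨G_adj_succ g, rfl, rfl⟩)
  have loop : ∀ (k : ℕ) (g : Fin (m+3)) (h h' : Fin 3),
      (SP m f).Reachable (g,h) (g + (k : Fin (m+3)), h') := by
    intro k
    induction k with
    | zero => intro g h h'; simpa using intra g h h'
    | succ k ih =>
      intro g h h'
      have hcast : ((k+1 : ℕ) : Fin (m+3)) = (k : Fin (m+3)) + 1 := by push_cast; ring
      rw [hcast, ← add_assoc]
      exact (ih g h 0).trans (step (g + (k : Fin (m+3))) 0 h')
  refine Connected.mk ?_
  intro u v
  obtain ⟨g, h⟩ := u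
  obtain ⟨g', h'⟩ := v
  have := loop ((g' - g).val) g h h'
  rwa [Fin.cast_val_eq_self, add_sub_cancel] at this

def tf (m : ℕ) (f : Fin (m+3) → Fin 3) (g : Fin (m+3)) : Fin 3 :=
  if f (g-1) = f (g+1) then f (g+1) + 1 else f (g+1)

def RS (m : ℕ) (f : Fin (m+3) → Fin 3) : Set (Fin (m+3) × Fin 3) :=
  Set.range (fun g => (g, tf m f g))

lemma RS_ncard (m : ℕ) (f : Fin (m+3) → Fin 3) : (RS m f).ncard = m + 3 := by
  have hinj : Function.Injective (fun g : Fin (m+3) => (g, tf m f g)) :=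
    fun a b h => congrArg Prod.fst h
  rw [RS, ← Set.image_univ, Set.ncard_image_of_injective _ hinj, Set.ncard_univ,
    Nat.card_eq_fintype_card, Fintype.card_fin]

lemma fin_one_ne_zero (m : ℕ) : (1 : Fin (m+3)) ≠ 0 := by
  intro h
  have hv := congrArg Fin.val h
  rw [@Fin.val_one (m+1), Fin.val_zero] at hv
  exact one_ne_zero hv

lemma gp1 {m : ℕ} (g : Fin (m+3)) : g + 1 ≠ g := by
  intro h
  exact fin_one_ne_zero m (add_eq_left.mp h)

lemma gm1 {m : ℕ} (g : Fin (m+3)) : g - 1 ≠ g := by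
  intro h
  exact fin_one_ne_zero m (sub_eq_self.mp h)

lemma fact1 : ∀ w p q z2 : Fin 3, p ≠ w → q ≠ w → p ≠ q → w ≠ z2 → z2 = p ∨ z2 = q := by decide

lemma nb_gen {m : ℕ} (f : Fin (m+3) → Fin 3) (g0 : Fin (m+3)) (w p q : Fin 3)
    (hw1 : w ≠ f (g0-1)) (hw2 : w ≠ f (g0+1)) (hp : p ≠ w) (hq : q ≠ w) (hpq : p ≠ q) :
    ∀ z, (SP m f).Adj (g0, w) z ↔ z = (g0, p) ∨ z = (g0, q) := by
  intro z
  constructor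
  · intro hadj
    obtain ⟨z1, z2⟩ := z
    rcases hadj with ⟨h1, h2⟩ | ⟨h1, h2, h3⟩
    · cases h1
      have hne := (H3_adj _ _).mp h2
      rcases fact1 w p q z2 hp hq hpq hne with rfl | rfl
      · exact Or.inl rfl
      · exact Or.inr rfl
    · exfalso
      rcases G_adj_char h1 with rfl | rfl
      · exact hw2 h2
      · exact hw1 h2
  · rintro (rfl | rfl)
    · exact Or.inl ⟨rfl, (H3_adj _ _).mpr (fun h => hp h.symm)⟩
    · exact Or.inl ⟨rfl, (H3_adj _ _).mpr (fun h => hq h.symm)⟩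

lemma RS_resolving (m : ℕ) (f : Fin (m+3) → Fin 3) : IsResolvingSet (SP m f) (RS m f) := by
  have conn := SP_conn m f
  have dz : ∀ u v : Fin (m+3) × Fin 3, (SP m f).dist u v = 0 ↔ u = v :=
    fun u v => conn.dist_eq_zero_iff
  have dle1 : ∀ (g : Fin (m+3)) (a b : Fin 3), (SP m f).dist (g,a) (g,b) ≤ 1 := by
    intro g a b
    by_cases he : a = b
    · rw [he, SimpleGraph.dist_self]; omega
    · exact le_of_eq (dist_eq_one_iff_adj.mpr (Or.inl ⟨rfl, (H3_adj a b).mpr he⟩))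
  have hfst_ne : ∀ {g g' : Fin (m+3)} {a b : Fin 3}, g ≠ g' →
      ((g,a) : Fin (m+3) × Fin 3) ≠ (g',b) := by
    intro g g' a b h he
    exact h (congrArg Prod.fst he)
  have f1 : ∀ c : Fin 3, c + 1 ≠ c := by decide
  have f2 : ∀ c : Fin 3, c + 2 ≠ c := by decide
  have f4 : ∀ c : Fin 3, c + 2 ≠ c + 1 := by decide
  intro u v hsame
  obtain ⟨g, a⟩ := u
  obtain ⟨g', b⟩ := v
  by_cases hgg : g = g'
  · -- same copy
    subst hgg
    by_cases hab : a = b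
    · rw [hab]
    · exfalso
      have ha_ne : a ≠ tf m f g := by
        intro h
        have h0 := hsame (g, tf m f g) ⟨g, rfl⟩
        rw [← h, SimpleGraph.dist_self] at h0
        have := (dz _ _).mp h0.symm
        exact hab (congrArg Prod.snd this).symm
      have hb_ne : b ≠ tf m f g := by
        intro h
        have h0 := hsame (g, tf m f g) ⟨g, rfl⟩
        rw [← h, SimpleGraph.dist_self] at h0
        have := (dz _ _).mp h0
        exact hab (congrArg Prod.snd this)
      by_cases hc : f (g-1) = f (g+1)
      · -- twin case
        have htf : tf m f g = f (g+1) + 1 := if_pos hc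
        rw [htf] at ha_ne hb_ne
        set s := ((g+1, tf m f (g+1)) : Fin (m+3) × Fin 3) with hs
        have hsne : ∀ e : Fin 3, s ≠ (g, e) := fun e => hfst_ne (gp1 g)
        have nb1 := nb_gen f g (f (g+1) + 1) (f (g+1)) (f (g+1) + 2)
          (by rw [hc]; exact f1 _) (f1 _) (fun h => f1 _ h.symm) (f4 _) (fun h => f2 _ h.symm)
        have nb2 := nb_gen f g (f (g+1) + 2) (f (g+1)) (f (g+1) + 1)
          (by rw [hc]; exact f2 _) (f2 _) (fun h => f2 _ h.symm) (fun h => f4 _ h.symm)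
          (fun h => f1 _ h.symm)
        have hB := dist_nbhd conn nb1 (hsne _)
        have hA := dist_nbhd conn nb2 (hsne _)
        have factT : ∀ c a b : Fin 3, a ≠ c + 1 → b ≠ c + 1 → a ≠ b →
            (a = c ∧ b = c + 2) ∨ (a = c + 2 ∧ b = c) := by decide
        have heq := hsame s ⟨g+1, rfl⟩
        rcases factT (f (g+1)) a b ha_ne hb_ne hab with ⟨rfl, rfl⟩ | ⟨rfl, rfl⟩ <;> omega
      · -- non-twin case
        have htf : tf m f g = f (g+1) := if_neg hc
        rw [htf] at ha_ne hb_ne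
        set s := ((g-1, tf m f (g-1)) : Fin (m+3) × Fin 3) with hs
        have hsne : ∀ e : Fin 3, s ≠ (g, e) := fun e => hfst_ne (gm1 g)
        have key : ∀ x y : Fin 3, x = f (g-1) → y ≠ f (g-1) → y ≠ f (g+1) →
            (SP m f).dist (g, x) s = (SP m f).dist (g, y) s → False := by
          intro x y hx hy1 hy2 heq
          subst hx
          have nbw := nb_gen f g y (f (g-1)) (f (g+1)) hy1 hy2
            (fun h => hy1 h.symm) (fun h => hy2 h.symm) hc
          have hxd := dist_nbhd conn nbw (hsne _)
          have hdl_le : (SP m f).dist (g, f (g-1)) s ≤ 2 := by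
            have htri := conn.dist_triangle (u := ((g, f (g-1)) : Fin (m+3) × Fin 3))
              (v := (g-1, f g)) (w := s)
            have hadj : (SP m f).Adj (g, f (g-1)) (g-1, f g) :=
              Or.inr ⟨G_adj_pred g, rfl, rfl⟩
            rw [dist_eq_one_iff_adj.mpr hadj] at htri
            have hle := dle1 (g-1) (f g) (tf m f (g-1))
            rw [← hs] at hle
            omega
          have hdl_ne : (SP m f).dist (g, f (g-1)) s ≠ 0 := by
            intro h
            exact (hsne _) ((dz _ _).mp h).symm
          have hdr_ne0 : (SP m f).dist (g, f (g+1)) s ≠ 0 := by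
            intro h
            exact (hsne _) ((dz _ _).mp h).symm
          have hdr_ne1 : (SP m f).dist (g, f (g+1)) s ≠ 1 := by
            intro h
            rcases dist_eq_one_iff_adj.mp h with ⟨h1, _⟩ | ⟨h1, h2, h3⟩
            · exact gm1 g h1.symm
            · exact hc h2.symm
          omega
        have factN : ∀ l r a b : Fin 3, l ≠ r → a ≠ r → b ≠ r → a ≠ b →
            (a = l ∧ b ≠ l ∧ b ≠ r) ∨ (b = l ∧ a ≠ l ∧ a ≠ r) := by decide
        have heq := hsame s ⟨g-1, rfl⟩
        rcases factN (f (g-1)) (f (g+1)) a b hc ha_ne hb_ne hab with ⟨h1, h2, h3⟩ | ⟨h1, h2, h3⟩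
        · exact key a b h1 h2 h3 heq
        · exact key b a h1 h2 h3 heq.symm
  · -- different copies
    exfalso
    have h1 := hsame (g, tf m f g) ⟨g, rfl⟩
    have h2 := hsame (g', tf m f g') ⟨g', rfl⟩
    -- dist u s_g analysis
    have hu_ne : ((g,a) : Fin (m+3) × Fin 3) ≠ (g, tf m f g) := by
      intro h
      rw [h, SimpleGraph.dist_self] at h1
      exact hfst_ne (Ne.symm hgg) ((dz _ _).mp h1.symm)
    have hv_ne : ((g',b) : Fin (m+3) × Fin 3) ≠ (g', tf m f g') := by
      intro h
      rw [h, SimpleGraph.dist_self] at h2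
      exact hfst_ne hgg ((dz _ _).mp h2)
    have hd1 : (SP m f).dist (g,a) (g, tf m f g) = 1 := by
      have := dle1 g a (tf m f g)
      have hne : (SP m f).dist (g,a) (g, tf m f g) ≠ 0 := fun h => hu_ne ((dz _ _).mp h)
      omega
    have hd2 : (SP m f).dist (g',b) (g', tf m f g') = 1 := by
      have := dle1 g' b (tf m f g')
      have hne : (SP m f).dist (g',b) (g', tf m f g') ≠ 0 := fun h => hv_ne ((dz _ _).mp h)
      omega
    have hadj1 : (SP m f).Adj (g',b) (g, tf m f g) := by
      rw [← dist_eq_one_iff_adj, ← h1, hd1]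
    have hadj2 : (SP m f).Adj (g,a) (g', tf m f g') := by
      rw [← dist_eq_one_iff_adj, h2, hd2]
    rcases hadj1 with ⟨hh, _⟩ | ⟨_, hb2, ht2⟩
    · exact hgg hh.symm
    · rcases hadj2 with ⟨hh, _⟩ | ⟨_, ha2, _⟩
      · exact hgg hh
      · -- ha2 : a = f g', ht2 : tf m f g = f g'
        exact hu_ne (Prod.ext rfl (ha2.trans ht2.symm))

lemma const_twin_lower (m : ℕ) {T : Set (Fin (m+3) × Fin 3)}
    (hres : IsResolvingSet (SP m (fun _ => 0)) T) : m + 3 ≤ T.ncard := by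
  have conn := SP_conn m (fun _ => (0 : Fin 3))
  have hpair : ∀ g : Fin (m+3), ∃ s ∈ T, s = (g, 1) ∨ s = (g, 2) := by
    intro g
    by_contra hcon
    push_neg at hcon
    have nb1 := nb_gen (fun _ => (0:Fin 3)) g 1 0 2 ((by decide : (1:Fin 3) ≠ 0))
      ((by decide : (1:Fin 3) ≠ 0)) (by decide) (by decide) (by decide)
    have nb2 := nb_gen (fun _ => (0:Fin 3)) g 2 0 1 ((by decide : (2:Fin 3) ≠ 0))
      ((by decide : (2:Fin 3) ≠ 0)) (by decide) (by decide) (by decide)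
    have heqd : ∀ s ∈ T, (SP m (fun _ => 0)).dist (g,1) s = (SP m (fun _ => 0)).dist (g,2) s := by
      intro s hs
      obtain ⟨h1, h2⟩ := hcon s hs
      have hA := dist_nbhd conn nb1 h1
      have hB := dist_nbhd conn nb2 h2
      omega
    have := hres (g,1) (g,2) heqd
    exact (by decide : (1 : Fin 3) ≠ 2) (congrArg Prod.snd this)
  choose F hFT hFval using hpair
  have hinj : Function.Injective F := by
    intro x y hxy
    rcases hFval x with h | h <;> rcases hFval y with h' | h' <;>
      exact congrArg Prod.fst (h.symm.trans (hxy.trans h'))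
  calc m + 3 = (Set.range F).ncard := by
        rw [← Set.image_univ, Set.ncard_image_of_injective _ hinj, Set.ncard_univ,
          Nat.card_eq_fintype_card, Fintype.card_fin]
    _ ≤ T.ncard := Set.ncard_le_ncard (by rintro _ ⟨g, rfl⟩; exact hFT g) T.toFinite

lemma dim_le (m : ℕ) (f : Fin (m+3) → Fin 3) : metricDim (SP m f) ≤ m + 3 :=
  Nat.sInf_le ⟨RS m f, RS_ncard m f, RS_resolving m f⟩

lemma dim_const (m : ℕ) : metricDim (SP m (fun _ => 0)) = m + 3 := by
  refine le_antisymm (dim_le m _) (le_csInf ⟨m + 3, RS m _, RS_ncard m _, RS_resolving m _⟩ ?_)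
  rintro b ⟨T, hT, hresT⟩
  rw [← hT]
  exact const_twin_lower m hresT

theorem upper_sierpinski_metric_dim_cycle_triangle (n : ℕ) (hn : 3 ≤ n) :
    sSup {k | ∃ f : Fin n → Fin 3,
      metricDim (sierpinskiProd (cycleGraph n) (cycleGraph 3) f) = k} = n := by
  obtain ⟨m, rfl⟩ : ∃ m, n = m + 3 := ⟨n - 3, by omega⟩
  have hmem : (m + 3 : ℕ) ∈ {k | ∃ f : Fin (m+3) → Fin 3,
      metricDim (sierpinskiProd (cycleGraph (m+3)) (cycleGraph 3) f) = k} :=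
    ⟨fun _ => 0, dim_const m⟩
  have hub : ∀ k ∈ {k | ∃ f : Fin (m+3) → Fin 3,
      metricDim (sierpinskiProd (cycleGraph (m+3)) (cycleGraph 3) f) = k}, k ≤ m + 3 := by
    rintro k ⟨f, rfl⟩
    exact dim_le m f
  exact le_antisymm (csSup_le ⟨_, hmem⟩ hub) (le_csSup ⟨m + 3, hub⟩ hmem)
end

section
/- For n ≥ 3 and any function f : V(C_n) → V(C_3), the metric dimension of the Sierpiński product C_n ⊗_f C_3 is at most n. -/
open SimpleGraph

namespace SierpinskiAux

open scoped Fin.CommRing Fin.NatCast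

variable {m : ℕ}

/-- The choice of landmark colour in each block. -/
def cFun (f : Fin (m+3) → Fin 3) (g : Fin (m+3)) : Fin 3 :=
  if f (g+1) = f (g-1) then f (g-1) + 1 else f (g+1)

lemma cFun_ne (f : Fin (m+3) → Fin 3) (g : Fin (m+3)) : cFun f g ≠ f (g-1) := by
  have h3 : ∀ x : Fin 3, x + 1 ≠ x := by decide
  unfold cFun
  split
  · exact h3 _
  · next h => exact h

lemma fin_add_one_ne (g : Fin (m+3)) : g + 1 ≠ g := by simp [Fin.ext_iff]

lemma fin_sub_one_ne (g : Fin (m+3)) : g - 1 ≠ g := by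
  intro h
  have h1 : (1 : Fin (m+3)) = 0 := sub_eq_self.mp h
  simp [Fin.ext_iff] at h1

lemma fin_add_ne_sub (g : Fin (m+3)) : g + 1 ≠ g - 1 := by
  intro h
  have h2 : (1 : Fin (m+3)) + 1 = 0 := by linear_combination h
  have h3 : ((1 : Fin (m+3)) + 1).val = 0 := by rw [h2]; rfl
  rw [Fin.val_add, Fin.val_one, Nat.mod_eq_of_lt (by omega)] at h3
  omega

lemma cyc_adj_succ (g : Fin (m+3)) : (cycleGraph (m+3)).Adj g (g+1) := by
  rw [cycleGraph_adj]; right; exact add_sub_cancel_left g 1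

lemma cyc_adj_pred (g : Fin (m+3)) : (cycleGraph (m+3)).Adj g (g-1) := by
  have h := cyc_adj_succ (g-1)
  rw [sub_add_cancel] at h
  exact h.symm

lemma cyc_adj_char {g g' : Fin (m+3)} (h : (cycleGraph (m+3)).Adj g g') :
    g' = g + 1 ∨ g' = g - 1 := by
  rw [cycleGraph_adj] at h
  rcases h with h | h
  · right; linear_combination -h
  · left; linear_combination h

lemma c3_adj {a b : Fin 3} : (cycleGraph 3).Adj a b ↔ a ≠ b := by
  rw [cycleGraph_three_eq_top]; exact top_adj a b

/-- Abbreviation for the product graph. -/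
abbrev GP (f : Fin (m+3) → Fin 3) : SimpleGraph (Fin (m+3) × Fin 3) :=
  sierpinskiProd (cycleGraph (m+3)) (cycleGraph 3) f

lemma gp_adj_iff (f : Fin (m+3) → Fin 3) {g g' : Fin (m+3)} {a b : Fin 3} :
    (GP f).Adj (g, a) (g', b) ↔ (g = g' ∧ a ≠ b) ∨
      ((cycleGraph (m+3)).Adj g g' ∧ a = f g' ∧ b = f g) := by
  show ((g = g' ∧ (cycleGraph 3).Adj a b) ∨ _) ↔ _
  rw [c3_adj]

lemma gp_preconnected (f : Fin (m+3) → Fin 3) : (GP f).Preconnected := by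
  have hblock : ∀ (g : Fin (m+3)) (a b : Fin 3), (GP f).Reachable (g, a) (g, b) := by
    intro g a b
    rcases eq_or_ne a b with rfl | h
    · exact Reachable.refl _
    · exact (((gp_adj_iff f).mpr (Or.inl ⟨rfl, h⟩) : (GP f).Adj (g, a) (g, b))).reachable
  have hstep : ∀ g : Fin (m+3), (GP f).Reachable (g, f (g+1)) (g + 1, f g) :=
    fun g => ((gp_adj_iff f).mpr (Or.inr ⟨cyc_adj_succ g, rfl, rfl⟩)).reachable
  have hnat : ∀ (k : ℕ) (y : Fin 3), (GP f).Reachable (0, f 1) ((k : Fin (m+3)), y) := by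
    intro k
    induction k with
    | zero => intro y; simpa using hblock 0 (f 1) y
    | succ k ih =>
      intro y
      have h1 := ih (f ((k : Fin (m+3)) + 1))
      have h2 := hstep (k : Fin (m+3))
      have h3 := hblock ((k : Fin (m+3)) + 1) (f (k : Fin (m+3))) y
      have hcast : ((k+1 : ℕ) : Fin (m+3)) = (k : Fin (m+3)) + 1 := by push_cast; ring
      rw [hcast]
      exact (h1.trans h2).trans h3
  intro u v
  obtain ⟨g, a⟩ := u; obtain ⟨g', b⟩ := v
  have h1 := hnat g.val a
  have h2 := hnat g'.val b
  rw [Fin.cast_val_eq_self] at h1 h2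
  exact h1.symm.trans h2

lemma two_step {V : Type*} {G : SimpleGraph V} {u v : V} (h0 : G.dist u v ≠ 0)
    (h2 : G.dist u v ≤ 2) : G.Adj u v ∨ ∃ w, G.Adj u w ∧ G.Adj w v := by
  rcases (by omega : G.dist u v = 1 ∨ G.dist u v = 2) with h | h
  · exact Or.inl (dist_eq_one_iff_adj.mp h)
  · obtain ⟨p, hp⟩ := exists_walk_of_dist_ne_zero h0
    rw [h] at hp
    cases p with
    | nil => simp at hp
    | cons hadj q =>
      exact Or.inr ⟨_, hadj, Walk.adj_of_length_eq_one (by simpa using hp)⟩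

lemma key_same (f : Fin (m+3) → Fin 3) (g : Fin (m+3)) (b : Fin 3)
    (hb1 : b ≠ f (g-1)) (hbc : b ≠ cFun f g)
    (H : ∀ g₀, (GP f).dist (g, f (g-1)) (g₀, cFun f g₀)
        = (GP f).dist (g, b) (g₀, cFun f g₀)) : False := by
  have hb2 : b ≠ f (g+1) := by
    unfold cFun at hbc
    by_cases h : f (g+1) = f (g-1)
    · rw [h]; exact hb1
    · rw [if_neg h] at hbc; exact hbc
  by_cases hc : cFun f (g-1) = f g
  · have h1 : (GP f).Adj (g, f (g-1)) (g-1, cFun f (g-1)) :=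
      (gp_adj_iff f).mpr (Or.inr ⟨cyc_adj_pred g, rfl, hc⟩)
    have h2 := H (g-1)
    rw [dist_eq_one_iff_adj.mpr h1] at h2
    have h3 := dist_eq_one_iff_adj.mp h2.symm
    rcases (gp_adj_iff f).mp h3 with ⟨h4, -⟩ | ⟨-, h4, -⟩
    · exact fin_sub_one_ne g h4.symm
    · exact hb1 h4
  · have e1 : (GP f).Adj (g, f (g-1)) (g-1, f g) :=
      (gp_adj_iff f).mpr (Or.inr ⟨cyc_adj_pred g, rfl, rfl⟩)
    have e2 : (GP f).Adj (g-1, f g) (g-1, cFun f (g-1)) :=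
      (gp_adj_iff f).mpr (Or.inl ⟨rfl, fun h => hc h.symm⟩)
    have hd2 : (GP f).dist (g, f (g-1)) (g-1, cFun f (g-1)) ≤ 2 := by
      simpa using dist_le (Walk.cons e1 (Walk.cons e2 Walk.nil))
    have hd0 : (GP f).dist (g, f (g-1)) (g-1, cFun f (g-1)) ≠ 0 := by
      intro h
      have heq := ((gp_preconnected f) _ _).dist_eq_zero_iff.mp h
      exact fin_sub_one_ne g (congrArg Prod.fst heq).symm
    rw [H (g-1)] at hd2 hd0
    rcases two_step hd0 hd2 with h3 | ⟨w, hvw, hwt⟩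
    · rcases (gp_adj_iff f).mp h3 with ⟨h4, -⟩ | ⟨-, h4, -⟩
      · exact fin_sub_one_ne g h4.symm
      · exact hb1 h4
    · obtain ⟨gw, cw⟩ := w
      rcases (gp_adj_iff f).mp hvw with ⟨h4, -⟩ | ⟨h4, h5, -⟩
      · -- h4 : g = gw, so w is in block g
        cases h4
        rcases (gp_adj_iff f).mp hwt with ⟨h6, -⟩ | ⟨-, -, h7⟩
        · exact fin_sub_one_ne g h6.symm
        · exact hc h7
      · rcases cyc_adj_char h4 with h6 | h6
        · rw [h6] at h5; exact hb2 h5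
        · rw [h6] at h5; exact hb1 h5

lemma resolving (f : Fin (m+3) → Fin 3) :
    IsResolvingSet (GP f) (Set.range fun g => (g, cFun f g)) := by
  intro u v H
  obtain ⟨g, a⟩ := u; obtain ⟨g', b⟩ := v
  have Hs : ∀ g₀ : Fin (m+3), (GP f).dist (g, a) (g₀, cFun f g₀)
      = (GP f).dist (g', b) (g₀, cFun f g₀) := fun g₀ => H _ ⟨g₀, rfl⟩
  by_cases hgg : g = g'
  · subst hgg
    rcases eq_or_ne a b with rfl | hab
    · rfl
    exfalso
    by_cases ha : a = cFun f g
    · have h0 : (GP f).dist (g, a) (g, cFun f g) = 0 := by rw [ha]; exact dist_self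
      have h1 := Hs g; rw [h0] at h1
      have heq := ((gp_preconnected f) _ _).dist_eq_zero_iff.mp h1.symm
      rw [← ha] at heq
      exact hab (congrArg Prod.snd heq).symm
    by_cases hb : b = cFun f g
    · have h0 : (GP f).dist (g, b) (g, cFun f g) = 0 := by rw [hb]; exact dist_self
      have h1 := Hs g; rw [h0] at h1
      have heq := ((gp_preconnected f) _ _).dist_eq_zero_iff.mp h1
      rw [← hb] at heq
      exact hab (congrArg Prod.snd heq)
    · have hd : f (g-1) ≠ cFun f g := fun h => cFun_ne f g h.symm
      rcases (by decide : ∀ a b c d : Fin 3, a ≠ b → a ≠ c → b ≠ c → d ≠ c → d = a ∨ d = b)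
          a b (cFun f g) (f (g-1)) hab ha hb hd with h | h
      · subst h
        exact key_same f g b (Ne.symm hab) hb Hs
      · subst h
        exact key_same f g a hab ha (fun g₀ => (Hs g₀).symm)
  · exfalso
    by_cases ha : a = cFun f g
    · have h0 : (GP f).dist (g, a) (g, cFun f g) = 0 := by rw [ha]; exact dist_self
      have h1 := Hs g; rw [h0] at h1
      have heq := ((gp_preconnected f) _ _).dist_eq_zero_iff.mp h1.symm
      exact hgg (congrArg Prod.fst heq).symm
    · have hu1 : (GP f).dist (g, a) (g, cFun f g) = 1 :=
        dist_eq_one_iff_adj.mpr ((gp_adj_iff f).mpr (Or.inl ⟨rfl, ha⟩))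
      have h2 := Hs g; rw [hu1] at h2
      have hadj1 := dist_eq_one_iff_adj.mp h2.symm
      rcases (gp_adj_iff f).mp hadj1 with ⟨h3, -⟩ | ⟨h3, h4, h5⟩
      · exact hgg h3.symm
      by_cases hb : b = cFun f g'
      · have h0 : (GP f).dist (g', b) (g', cFun f g') = 0 := by rw [hb]; exact dist_self
        have h1 := Hs g'; rw [h0] at h1
        have heq := ((gp_preconnected f) _ _).dist_eq_zero_iff.mp h1
        exact hgg (congrArg Prod.fst heq)
      · have hv1 : (GP f).dist (g', b) (g', cFun f g') = 1 :=
          dist_eq_one_iff_adj.mpr ((gp_adj_iff f).mpr (Or.inl ⟨rfl, hb⟩))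
        have h6 := Hs g'; rw [hv1] at h6
        have hadj2 := dist_eq_one_iff_adj.mp h6
        rcases (gp_adj_iff f).mp hadj2 with ⟨h7, -⟩ | ⟨h7, h8, h9⟩
        · exact hgg h7
        rcases cyc_adj_char h3 with h10 | h10
        · -- h10 : g = g' + 1, so g' = g - 1 and h5 : cFun f g = f g' contradicts cFun_ne
          apply cFun_ne f g
          rw [h5]
          congr 1
          rw [h10]
          exact (add_sub_cancel_right g' 1).symm
        · -- h10 : g = g' - 1 and h9 : cFun f g' = f g contradicts cFun_ne
          exact cFun_ne f g' (h10 ▸ h9)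

end SierpinskiAux

theorem sierpinskiProd_cycle_triangle_dim_le (n : ℕ) (hn : 3 ≤ n)
    (f : Fin n → Fin 3) :
    metricDim (sierpinskiProd (cycleGraph n) (cycleGraph 3) f) ≤ n := by
  obtain ⟨m, rfl⟩ : ∃ m, n = m + 3 := ⟨n - 3, by omega⟩
  apply Nat.sInf_le
  refine ⟨Set.range fun g => (g, SierpinskiAux.cFun f g), ?_, SierpinskiAux.resolving f⟩
  have hinj : Function.Injective (fun g : Fin (m+3) => (g, SierpinskiAux.cFun f g)) :=
    fun a b h => congrArg Prod.fst h
  rw [← Set.image_univ, Set.ncard_image_of_injective _ hinj, Set.ncard_univ,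
    Nat.card_eq_fintype_card, Fintype.card_fin]
end

section
/- For k ≥ 3, the graph F_k has metric dimension 2, where F_k is the 'sun-like' graph obtained from the cycle v₀v₁⋯v_{2k−1}v₀ by adding k new vertices u₀, u₂, ..., u_{2(k−1)} together with the edges u_{2i}v_{2i−1} and u_{2i}v_{2i} (indices mod 2k) for each 0 ≤ i ≤ k−1. -/
open SimpleGraph

/-- The graph `F k`: a cycle `v_0 ... v_{2k-1}` together with vertices `u_{2i}`
(for `0 ≤ i ≤ k-1`) joined to `v_{2i-1}` and `v_{2i}` (indices mod `2k`). -/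
def sunGraph (k : ℕ) : SimpleGraph (Fin (2 * k) ⊕ Fin k) :=
  SimpleGraph.fromRel (fun p q =>
    match p, q with
    | .inl a, .inl b => (a.val + 1) % (2 * k) = b.val
    | .inl a, .inr i => a.val = 2 * i.val ∨ a.val = (2 * i.val + 2 * k - 1) % (2 * k)
    | _, _ => False)

namespace SunGraphAux

/-- `(a - 2j) mod 2k` for `a < 2k`, `j < k`, written without `%`. -/
def tv (k j a : ℕ) : ℕ := if 2*j ≤ a then a - 2*j else a + 2*k - 2*j

/-- Explicit distance to the pendant vertex `u_j` in `sunGraph k`. -/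
def fd (k j : ℕ) : (Fin (2*k) ⊕ Fin k) → ℕ
  | .inl a => 1 + min (tv k j a.val) (2*k - 1 - tv k j a.val)
  | .inr i => if i.val = j then 0 else
      2 + min (tv k j (2*i.val) - 1) (2*k - 1 - tv k j (2*i.val))

lemma succ_mod {k a b : ℕ} (ha : a < 2*k) (hb : b < 2*k) :
    (a + 1) % (2*k) = b ↔ (b = a + 1 ∨ (a = 2*k - 1 ∧ b = 0)) := by
  rcases Nat.lt_or_ge (a+1) (2*k) with h | h
  · rw [Nat.mod_eq_of_lt h]; omega
  · have h2 : a + 1 = 2*k := by omega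
    rw [h2, Nat.mod_self]; omega

lemma pend_mod {k a i : ℕ} (ha : a < 2*k) (hi : i < k) :
    a = (2*i + 2*k - 1) % (2*k) ↔ ((i = 0 ∧ a = 2*k - 1) ∨ (1 ≤ i ∧ a = 2*i - 1)) := by
  rcases Nat.eq_zero_or_pos i with h0 | h1
  · subst h0
    rw [Nat.mod_eq_of_lt (by omega)]; omega
  · have h2 : 2*i + 2*k - 1 = (2*i - 1) + 2*k := by omega
    rw [h2, Nat.add_mod_right, Nat.mod_eq_of_lt (by omega)]; omega

lemma adj_inl_inl {k : ℕ} (a b : Fin (2*k)) :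
    (sunGraph k).Adj (Sum.inl a) (Sum.inl b) ↔
      (b.val = a.val + 1 ∨ (a.val = 2*k - 1 ∧ b.val = 0) ∨
       a.val = b.val + 1 ∨ (b.val = 2*k - 1 ∧ a.val = 0)) := by
  have ha := a.isLt; have hb := b.isLt
  have hk : 0 < k := by omega
  simp only [sunGraph, fromRel_adj, ne_eq, Sum.inl.injEq]
  rw [succ_mod ha hb, succ_mod hb ha]
  constructor
  · rintro ⟨-, h⟩; tauto
  · intro h
    refine ⟨fun hab => ?_, by tauto⟩
    have : a.val = b.val := by rw [hab]
    omega

lemma adj_inl_inr {k : ℕ} (a : Fin (2*k)) (i : Fin k) :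
    (sunGraph k).Adj (Sum.inl a) (Sum.inr i) ↔
      (a.val = 2*i.val ∨ (i.val = 0 ∧ a.val = 2*k - 1) ∨
       (1 ≤ i.val ∧ a.val = 2*i.val - 1)) := by
  have ha := a.isLt; have hi := i.isLt
  simp only [sunGraph, fromRel_adj, ne_eq]
  rw [pend_mod ha hi]
  simp only [reduceCtorEq, not_false_eq_true, true_and]
  tauto

lemma not_adj_inr_inr {k : ℕ} (i i' : Fin k) :
    ¬ (sunGraph k).Adj (Sum.inr i) (Sum.inr i') := by
  simp [sunGraph, fromRel_adj]

/-- Lipschitz property of `fd` along edges. -/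
lemma fd_lip {k : ℕ} (hk : 3 ≤ k) (j : ℕ) (hj : j < k) :
    ∀ {x y : Fin (2*k) ⊕ Fin k}, (sunGraph k).Adj x y → fd k j x ≤ fd k j y + 1 := by
  rintro (a | i) (b | i')
  · intro h
    rw [adj_inl_inl] at h
    have ha := a.isLt; have hb := b.isLt
    simp only [fd, tv]
    split_ifs <;> omega
  · intro h
    rw [adj_inl_inr] at h
    have ha := a.isLt; have hi := i'.isLt
    simp only [fd, tv]
    split_ifs <;> omega
  · intro h
    rw [(sunGraph k).adj_comm, adj_inl_inr] at h
    have hb := b.isLt; have hi := i.isLt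
    simp only [fd, tv]
    split_ifs <;> omega
  · intro h; exact absurd h (not_adj_inr_inr _ _)

lemma fd_zero {k : ℕ} (j : ℕ) (hj : j < k) : fd k j (Sum.inr ⟨j, hj⟩) = 0 := by
  simp [fd]

lemma eq_of_fd_eq_zero {k : ℕ} (j : ℕ) (hj : j < k) {x : Fin (2*k) ⊕ Fin k}
    (hx : fd k j x = 0) : x = Sum.inr ⟨j, hj⟩ := by
  rcases x with a | i
  · simp [fd] at hx
  · simp only [fd] at hx
    split_ifs at hx with h
    · congr 1; exact Fin.ext h
    · omega

/-- Descent: from any vertex with positive `fd`, some neighbour decreases `fd` by one. -/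
lemma fd_descend {k : ℕ} (hk : 3 ≤ k) (j : ℕ) (hj : j < k) {x : Fin (2*k) ⊕ Fin k}
    (hx : fd k j x ≠ 0) :
    ∃ y, (sunGraph k).Adj x y ∧ fd k j y + 1 = fd k j x := by
  rcases x with a | i
  · have ha := a.isLt
    clear hx
    by_cases h0 : a.val = 2*j
    · refine ⟨Sum.inr ⟨j, hj⟩, (adj_inl_inr a ⟨j, hj⟩).mpr (Or.inl h0), ?_⟩
      rw [fd_zero j hj]
      simp only [fd, tv]; split_ifs <;> omega
    · by_cases h1 : (j = 0 ∧ a.val = 2*k - 1) ∨ (1 ≤ j ∧ a.val = 2*j - 1)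
      · refine ⟨Sum.inr ⟨j, hj⟩, (adj_inl_inr a ⟨j, hj⟩).mpr (Or.inr h1), ?_⟩
        rw [fd_zero j hj]
        simp only [fd, tv]; split_ifs <;> omega
      · by_cases ht : tv k j a.val ≤ k - 1 <;> simp only [tv] at ht
        · -- step backwards to a-1
          by_cases ha0 : a.val = 0
          · refine ⟨Sum.inl ⟨2*k - 1, by omega⟩, ?_, ?_⟩
            · rw [adj_inl_inl]; simp only [Fin.val_mk, true_and, and_true, or_true, true_or] <;> omega
            · simp only [fd, tv, Fin.val_mk]; split_ifs at ht ⊢ <;> omega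
          · refine ⟨Sum.inl ⟨a.val - 1, by omega⟩, ?_, ?_⟩
            · rw [adj_inl_inl]; simp only [Fin.val_mk, true_and, and_true, or_true, true_or] <;> omega
            · simp only [fd, tv, Fin.val_mk]; split_ifs at ht ⊢ <;> omega
        · -- step forwards to a+1
          by_cases ha1 : a.val = 2*k - 1
          · refine ⟨Sum.inl ⟨0, by omega⟩, ?_, ?_⟩
            · rw [adj_inl_inl]; simp only [Fin.val_mk, true_and, and_true, or_true, true_or] <;> omega
            · simp only [fd, tv, Fin.val_mk]; split_ifs at ht ⊢ <;> omega
          · refine ⟨Sum.inl ⟨a.val + 1, by omega⟩, ?_, ?_⟩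
            · rw [adj_inl_inl]; simp only [Fin.val_mk, true_and, and_true, or_true, true_or] <;> omega
            · simp only [fd, tv, Fin.val_mk]; split_ifs at ht ⊢ <;> omega
  · have hi := i.isLt
    have hij : i.val ≠ j := by
      intro h; apply hx; simp [fd, h]
    clear hx
    by_cases hs : tv k j (2*i.val) ≤ k <;> simp only [tv] at hs
    · -- go to v_{2i-1}
      by_cases hi0 : i.val = 0
      · refine ⟨Sum.inl ⟨2*k - 1, by omega⟩,
          ((adj_inl_inr ⟨2*k - 1, by omega⟩ i).mpr (by right; left; exact ⟨hi0, rfl⟩)).symm, ?_⟩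
        simp only [fd, tv, Fin.val_mk]
        split_ifs at hs ⊢ <;> omega
      · refine ⟨Sum.inl ⟨2*i.val - 1, by omega⟩,
          ((adj_inl_inr ⟨2*i.val - 1, by omega⟩ i).mpr (by right; right; exact ⟨by omega, rfl⟩)).symm, ?_⟩
        simp only [fd, tv, Fin.val_mk]
        split_ifs at hs ⊢ <;> omega
    · -- go to v_{2i}
      refine ⟨Sum.inl ⟨2*i.val, by omega⟩,
        ((adj_inl_inr ⟨2*i.val, by omega⟩ i).mpr (Or.inl rfl)).symm, ?_⟩
      simp only [fd, tv, Fin.val_mk]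
      split_ifs at hs ⊢ <;> omega

lemma exists_walk {k : ℕ} (hk : 3 ≤ k) (j : ℕ) (hj : j < k) :
    ∀ (n : ℕ) (x : Fin (2*k) ⊕ Fin k), fd k j x = n →
      ∃ w : (sunGraph k).Walk x (Sum.inr ⟨j, hj⟩), w.length = n := by
  intro n
  induction n with
  | zero =>
    intro x hx
    obtain rfl := eq_of_fd_eq_zero j hj hx
    exact ⟨SimpleGraph.Walk.nil, rfl⟩
  | succ n ih =>
    intro x hx
    obtain ⟨y, hadj, hy⟩ := fd_descend hk j hj (x := x) (by omega)
    obtain ⟨w, hw⟩ := ih y (by omega)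
    exact ⟨SimpleGraph.Walk.cons hadj w, by simp [hw]⟩

lemma fd_le_walk' {k : ℕ} (hk : 3 ≤ k) (j : ℕ) (hj : j < k) {x y : Fin (2*k) ⊕ Fin k}
    (w : (sunGraph k).Walk x y) : fd k j x ≤ fd k j y + w.length := by
  induction w with
  | nil => simp
  | cons hadj w ih =>
    have := fd_lip hk j hj hadj
    simp only [SimpleGraph.Walk.length_cons]
    omega

lemma fd_le_walk {k : ℕ} (hk : 3 ≤ k) (j : ℕ) (hj : j < k) {x : Fin (2*k) ⊕ Fin k}
    (w : (sunGraph k).Walk x (Sum.inr ⟨j, hj⟩)) : fd k j x ≤ w.length := by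
  have := fd_le_walk' hk j hj w
  rw [fd_zero j hj] at this
  omega

lemma dist_eq_fd {k : ℕ} (hk : 3 ≤ k) (j : ℕ) (hj : j < k) (x : Fin (2*k) ⊕ Fin k) :
    (sunGraph k).dist x (Sum.inr ⟨j, hj⟩) = fd k j x := by
  obtain ⟨w, hw⟩ := exists_walk hk j hj (fd k j x) x rfl
  refine le_antisymm ((SimpleGraph.dist_le w).trans_eq hw) ?_
  obtain ⟨p, hp⟩ := SimpleGraph.Reachable.exists_walk_length_eq_dist ⟨w⟩
  calc fd k j x ≤ p.length := fd_le_walk hk j hj p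
    _ = _ := hp

/-- The key injectivity: distances to `u_0` and `u_{k/2+1}` determine the vertex. -/
lemma fd_inj {k : ℕ} (hk : 3 ≤ k) (x y : Fin (2*k) ⊕ Fin k)
    (h0 : fd k 0 x = fd k 0 y) (hm : fd k (k/2+1) x = fd k (k/2+1) y) : x = y := by
  rcases x with a | i <;> rcases y with b | i'
  · have ha := a.isLt; have hb := b.isLt
    have : a.val = b.val := by
      simp only [fd, tv] at h0 hm
      split_ifs at h0 hm <;> omega
    exact congrArg Sum.inl (Fin.ext this)
  · have ha := a.isLt; have hi := i'.isLt
    exfalso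
    simp only [fd, tv] at h0 hm
    split_ifs at h0 hm <;> omega
  · have hb := b.isLt; have hi := i.isLt
    exfalso
    simp only [fd, tv] at h0 hm
    split_ifs at h0 hm <;> omega
  · have hi := i.isLt; have hi' := i'.isLt
    have : i.val = i'.val := by
      simp only [fd, tv] at h0 hm
      split_ifs at h0 hm <;> omega
    exact congrArg Sum.inr (Fin.ext this)

end SunGraphAux

theorem sunGraph_metricDim (k : ℕ) (hk : 3 ≤ k) : metricDim (sunGraph k) = 2 := by
  classical
  have hj0 : 0 < k := by omega
  have hjm : k/2 + 1 < k := by omega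
  have h2mem : 2 ∈ {n | ∃ S : Set (Fin (2*k) ⊕ Fin k), S.ncard = n ∧
      IsResolvingSet (sunGraph k) S} := by
    refine ⟨{Sum.inr ⟨0, hj0⟩, Sum.inr ⟨k/2+1, hjm⟩}, ?_, ?_⟩
    · refine Set.ncard_pair ?_
      intro h
      rw [Sum.inr.injEq, Fin.mk.injEq] at h
      omega
    · intro u v h
      have h1 := h _ (Set.mem_insert _ _)
      have h2 := h _ (Set.mem_insert_of_mem _ rfl)
      simp only [SunGraphAux.dist_eq_fd hk 0 hj0] at h1
      simp only [SunGraphAux.dist_eq_fd hk (k/2+1) hjm] at h2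
      exact SunGraphAux.fd_inj hk u v h1 h2
  unfold metricDim
  refine le_antisymm (Nat.sInf_le h2mem) (le_csInf ⟨2, h2mem⟩ ?_)
  rintro n ⟨S, hcard, hres⟩
  by_contra hlt
  push_neg at hlt
  interval_cases n
  · rw [Set.ncard_eq_zero (Set.toFinite S)] at hcard
    subst hcard
    have h01 := hres (Sum.inl ⟨0, by omega⟩) (Sum.inl ⟨1, by omega⟩) (by simp)
    rw [Sum.inl.injEq, Fin.mk.injEq] at h01
    omega
  · obtain ⟨s, rfl⟩ := Set.ncard_eq_one.mp hcard
    obtain ⟨y1, y2, hy1, hy2, hne⟩ :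
        ∃ y1 y2, (sunGraph k).Adj s y1 ∧ (sunGraph k).Adj s y2 ∧ y1 ≠ y2 := by
      rcases s with a | i
      · have ha := a.isLt
        by_cases h1 : a.val = 2*k - 1
        · refine ⟨Sum.inl ⟨0, by omega⟩, Sum.inl ⟨a.val - 1, by omega⟩, ?_, ?_, ?_⟩
          · rw [SunGraphAux.adj_inl_inl]; simp only [Fin.val_mk, true_and, and_true, or_true, true_or] <;> omega
          · rw [SunGraphAux.adj_inl_inl]; simp only [Fin.val_mk, true_and, and_true, or_true, true_or] <;> omega
          · intro h; rw [Sum.inl.injEq, Fin.mk.injEq] at h; omega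
        · by_cases h2 : a.val = 0
          · refine ⟨Sum.inl ⟨a.val + 1, by omega⟩, Sum.inl ⟨2*k - 1, by omega⟩, ?_, ?_, ?_⟩
            · rw [SunGraphAux.adj_inl_inl]; simp only [Fin.val_mk, true_and, and_true, or_true, true_or] <;> omega
            · rw [SunGraphAux.adj_inl_inl]; simp only [Fin.val_mk, true_and, and_true, or_true, true_or] <;> omega
            · intro h; rw [Sum.inl.injEq, Fin.mk.injEq] at h; omega
          · refine ⟨Sum.inl ⟨a.val + 1, by omega⟩, Sum.inl ⟨a.val - 1, by omega⟩, ?_, ?_, ?_⟩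
            · rw [SunGraphAux.adj_inl_inl]; simp only [Fin.val_mk, true_and, and_true, or_true, true_or] <;> omega
            · rw [SunGraphAux.adj_inl_inl]; simp only [Fin.val_mk, true_and, and_true, or_true, true_or] <;> omega
            · intro h; rw [Sum.inl.injEq, Fin.mk.injEq] at h; omega
      · have hi := i.isLt
        by_cases h1 : i.val = 0
        · refine ⟨Sum.inl ⟨2*i.val, by omega⟩, Sum.inl ⟨2*k - 1, by omega⟩,
            ((SunGraphAux.adj_inl_inr _ i).mpr (Or.inl rfl)).symm,
            ((SunGraphAux.adj_inl_inr _ i).mpr (by right; left; exact ⟨h1, rfl⟩)).symm, ?_⟩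
          intro h; rw [Sum.inl.injEq, Fin.mk.injEq] at h; omega
        · refine ⟨Sum.inl ⟨2*i.val, by omega⟩, Sum.inl ⟨2*i.val - 1, by omega⟩,
            ((SunGraphAux.adj_inl_inr _ i).mpr (Or.inl rfl)).symm,
            ((SunGraphAux.adj_inl_inr _ i).mpr (by right; right; exact ⟨by omega, rfl⟩)).symm, ?_⟩
          intro h; rw [Sum.inl.injEq, Fin.mk.injEq] at h; omega
    apply hne
    apply hres
    intro t ht
    rw [Set.mem_singleton_iff] at ht
    subst ht
    rw [SimpleGraph.dist_comm, SimpleGraph.dist_eq_one_iff_adj.mpr hy1,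
        SimpleGraph.dist_comm, SimpleGraph.dist_eq_one_iff_adj.mpr hy2]
end

section
/- If T is a tree that is not a path, then dim(T) = n₁(T) − ex(T), where n₁(T) is the number of leaves of T and ex(T) is the number of exterior branch vertices of T. -/
open SimpleGraph

/-- A leaf is a vertex of degree 1. -/
def IsLeaf {V : Type*} (G : SimpleGraph V) (v : V) : Prop := (G.neighborSet v).ncard = 1

/-- A branch vertex is a vertex of degree at least 3. -/
def IsBranchVertex {V : Type*} (G : SimpleGraph V) (v : V) : Prop := 3 <= (G.neighborSet v).ncard

/-- `u` is a terminal leaf of the branch vertex `v`: `v` is the branch vertex nearest to `u`. -/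
def IsTerminalLeafOf {V : Type*} (G : SimpleGraph V) (u v : V) : Prop :=
  IsLeaf G u /\ IsBranchVertex G v /\ G.Reachable u v /\
    forall w, IsBranchVertex G w -> G.Reachable u w -> w ≠ v -> G.dist u v < G.dist u w

/-- An exterior branch vertex has at least one terminal leaf. -/
def IsExteriorBranchVertex {V : Type*} (G : SimpleGraph V) (v : V) : Prop :=
  exists u, IsTerminalLeafOf G u v

set_option linter.unusedSectionVars false
set_option linter.unusedVariables false

namespace TreeAux
open Walk

variable {V : Type*} {T : SimpleGraph V}

lemma dc {V : Type*} (T : SimpleGraph V) (a b : V) : T.dist a b = T.dist b a :=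
  SimpleGraph.dist_comm

/-- distance-betweenness -/
def Btw (T : SimpleGraph V) (x m y : V) : Prop := T.dist x m + T.dist m y = T.dist x y

section
variable (hT : T.IsTree)
include hT

noncomputable def P (u v : V) : T.Walk u v := (hT.existsUnique_path u v).exists.choose

lemma P_isPath (u v : V) : (P hT u v).IsPath := (hT.existsUnique_path u v).exists.choose_spec

lemma P_unique {u v : V} {p : T.Walk u v} (hp : p.IsPath) : p = P hT u v :=
  (hT.existsUnique_path u v).unique hp (P_isPath hT u v)

lemma length_eq_dist {u v : V} {p : T.Walk u v} (hp : p.IsPath) : p.length = T.dist u v := by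
  obtain ⟨q, hq, hlen⟩ := hT.isConnected.exists_path_of_dist u v
  rw [← hlen, P_unique hT hp, P_unique hT hq]

lemma btw_of_mem_support {u v w : V} {p : T.Walk u v} (hp : p.IsPath) (hw : w ∈ p.support) :
    Btw T u w v := by
  classical
  have h1 : (p.takeUntil w hw).IsPath := hp.takeUntil hw
  have h2 : (p.dropUntil w hw).IsPath := hp.dropUntil hw
  have := congrArg Walk.length (p.take_spec hw)
  rw [Walk.length_append] at this
  unfold Btw
  rw [← length_eq_dist hT h1, ← length_eq_dist hT h2, this, length_eq_dist hT hp]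

lemma isPath_append {u m v : V} {p : T.Walk u m} {q : T.Walk m v} (hp : p.IsPath)
    (hq : q.IsPath) (h : ∀ w, w ∈ p.support → w ∈ q.support → w = m) :
    (p.append q).IsPath := by
  have hqc : q.support = m :: q.support.tail := q.support_eq_cons
  rw [isPath_def, Walk.support_append]
  apply List.Nodup.append hp.support_nodup
  · have := hq.support_nodup
    rw [hqc] at this
    exact this.of_cons
  · intro w hw1 hw2
    have hwq : w ∈ q.support := by rw [hqc]; exact List.mem_cons_of_mem _ hw2
    have : w = m := h w hw1 hwq
    subst this
    have := hq.support_nodup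
    rw [hqc] at this
    exact (List.nodup_cons.mp this).1 hw2

lemma btw_iff_mem_support {u v w : V} {p : T.Walk u v} (hp : p.IsPath) :
    Btw T u w v ↔ w ∈ p.support := by
  constructor
  · intro hb
    have hq : ((P hT u w).append (P hT w v)).length = T.dist u v := by
      rw [Walk.length_append, length_eq_dist hT (P_isPath hT u w),
        length_eq_dist hT (P_isPath hT w v)]
      exact hb
    have hqp : ((P hT u w).append (P hT w v)).IsPath := by
      apply Walk.isPath_of_length_eq_dist _ hq
    have : (P hT u w).append (P hT w v) = p := (P_unique hT hqp).trans (P_unique hT hp).symm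
    rw [← this, Walk.mem_support_append_iff]
    left; exact Walk.end_mem_support _
  · exact btw_of_mem_support hT hp

lemma btw_unique {x y w w' : V} (h1 : Btw T x w y) (h2 : Btw T x w' y)
    (h3 : T.dist x w = T.dist x w') : w = w' := by
  classical
  have hp := P_isPath hT x y
  have hw : w ∈ (P hT x y).support := (btw_iff_mem_support hT hp).mp h1
  have hw' : w' ∈ (P hT x y).support := (btw_iff_mem_support hT hp).mp h2
  have hsplit := (P hT x y).take_spec hw'
  rw [← hsplit, Walk.mem_support_append_iff] at hw
  rcases hw with hw | hw
  · have hb : Btw T x w w' := btw_of_mem_support hT (hp.takeUntil hw') hw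
    have : T.dist w w' = 0 := by
      unfold Btw at hb; omega
    exact ((hT.isConnected.preconnected w w').dist_eq_zero_iff).mp this
  · have hb : Btw T w' w y := btw_of_mem_support hT (hp.dropUntil hw') hw
    unfold Btw at h1 h2 hb
    have hd : T.dist w' w = 0 := by omega
    exact (((hT.isConnected.preconnected w' w).dist_eq_zero_iff).mp hd).symm

omit hT in
lemma exists_first_meet (S : Set V) [DecidablePred (· ∈ S)] {z x : V} (p : T.Walk z x)
    (hx : x ∈ S) : ∃ (m : V) (p₁ : T.Walk z m) (p₂ : T.Walk m x), m ∈ S ∧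
      p₁.append p₂ = p ∧ ∀ w ∈ p₁.support, w ∈ S → w = m := by
  induction p with
  | nil =>
    exact ⟨_, Walk.nil, Walk.nil, hx, rfl, by simp⟩
  | @cons a b c h q ih =>
    by_cases ha : a ∈ S
    · exact ⟨a, Walk.nil, Walk.cons h q, ha, rfl, by simp⟩
    · obtain ⟨m, q₁, q₂, hm, hq, hfirst⟩ := ih hx
      refine ⟨m, Walk.cons h q₁, q₂, hm, by rw [Walk.cons_append, hq], ?_⟩
      intro w hw hwS
      rw [Walk.support_cons] at hw
      rcases List.mem_cons.mp hw with hw | hw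
      · exact absurd (hw ▸ hwS) ha
      · exact hfirst w hw hwS

lemma median (x y z : V) : ∃ m, Btw T x m y ∧ Btw T x m z ∧ Btw T y m z := by
  classical
  have hp := P_isPath hT z x
  obtain ⟨m, p₁, p₂, hm, happ, hfirst⟩ := exists_first_meet
    {w | w ∈ (P hT x y).support} (P hT z x) (by simp [Walk.end_mem_support])
  have hp₁ : p₁.IsPath := by rw [← happ] at hp; exact hp.of_append_left
  have hp₂ : p₂.IsPath := by rw [← happ] at hp; exact hp.of_append_right
  -- m on P x y
  have hbxy : Btw T x m y := btw_of_mem_support hT (P_isPath hT x y) hm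
  -- Btw z m x from split
  have hbzx : Btw T z m x := by
    unfold Btw
    rw [← length_eq_dist hT hp₁, ← length_eq_dist hT hp₂, ← length_eq_dist hT hp,
      ← happ, Walk.length_append]
  -- Btw z m y via constructed path
  have hdropP : ((P hT x y).dropUntil m hm).IsPath := (P_isPath hT x y).dropUntil hm
  have hbig : (p₁.append ((P hT x y).dropUntil m hm)).IsPath := by
    apply isPath_append hT hp₁ hdropP
    intro w hw1 hw2
    exact hfirst w hw1 (Walk.support_dropUntil_subset _ hm hw2)
  have hbzy : Btw T z m y := by
    unfold Btw
    rw [← length_eq_dist hT hp₁, ← length_eq_dist hT hdropP,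
      ← length_eq_dist hT hbig, Walk.length_append]
  refine ⟨m, hbxy, ?_, ?_⟩
  · unfold Btw at hbzx ⊢
    rw [dc T x m, dc T x z, dc T m z]; omega
  · unfold Btw at hbzy ⊢
    rw [dc T y m, dc T y z, dc T m z]; omega

lemma dist0 {a b : V} : T.dist a b = 0 ↔ a = b :=
  (hT.isConnected.preconnected a b).dist_eq_zero_iff

omit hT in
lemma btw_symm {x m y : V} (h : Btw T x m y) : Btw T y m x := by
  unfold Btw at *; rw [dc T y m, dc T m x, dc T y x]; omega

lemma tri (a b c : V) : T.dist a c ≤ T.dist a b + T.dist b c :=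
  hT.isConnected.dist_triangle

lemma adj_dist_succ {a b : V} (hab : T.Adj a b) (r : V) :
    T.dist r b = T.dist r a + 1 ∨ T.dist r a = T.dist r b + 1 := by
  have hd1 : T.dist a b = 1 := (dist_eq_one_iff_adj (G := T)).mpr hab
  obtain ⟨m, h1, h2, h3⟩ := median hT a b r
  have t1 := tri hT r a b
  have t2 := tri hT r b a
  unfold Btw at h1 h2 h3
  have c1 := dc T a b; have c2 := dc T r a; have c3 := dc T r b
  have c4 := dc T m r; have c5 := dc T m b
  omega

lemma exists_toward {m z : V} (h : z ≠ m) :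
    ∃ c, T.Adj m c ∧ T.dist c z + 1 = T.dist m z := by
  have hp := P_isPath hT m z
  cases hpc : P hT m z with
  | nil => exact absurd rfl h.symm
  | cons hadj q =>
    refine ⟨_, hadj, ?_⟩
    have hq : q.IsPath := by rw [hpc] at hp; exact hp.of_cons
    have : (P hT m z).length = T.dist m z := length_eq_dist hT hp
    rw [hpc] at this
    rw [Walk.length_cons] at this
    rw [← length_eq_dist hT hq]
    omega

noncomputable def dirv (hT : T.IsTree) (m z : V) : V :=
  open scoped Classical in
  if h : z = m then z else (exists_toward hT h).choose

lemma dirv_adj {m z : V} (h : z ≠ m) : T.Adj m (dirv hT m z) := by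
  rw [dirv, dif_neg h]; exact (exists_toward hT h).choose_spec.1

lemma dirv_dist {m z : V} (h : z ≠ m) : T.dist (dirv hT m z) z + 1 = T.dist m z := by
  rw [dirv, dif_neg h]; exact (exists_toward hT h).choose_spec.2

lemma dirv_btw {m z : V} (h : z ≠ m) : Btw T m (dirv hT m z) z := by
  have h1 := dirv_dist hT h
  have h2 : T.dist m (dirv hT m z) = 1 := (dist_eq_one_iff_adj (G := T)).mpr (dirv_adj hT h)
  unfold Btw; omega

lemma eq_dirv {m z c : V} (h : z ≠ m) (hadj : T.Adj m c)
    (hd : T.dist c z + 1 = T.dist m z) : c = dirv hT m z := by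
  have h2 : T.dist m c = 1 := (dist_eq_one_iff_adj (G := T)).mpr hadj
  have h3 : T.dist m (dirv hT m z) = 1 := (dist_eq_one_iff_adj (G := T)).mpr (dirv_adj hT h)
  refine btw_unique hT (x := m) (y := z) ?_ ?_ (by omega)
  · unfold Btw; omega
  · exact dirv_btw hT h

lemma ne_of_btw_end {m z w : V} (h : Btw T m z w) (hz : z ≠ m) : w ≠ m := by
  intro hwm
  unfold Btw at h
  rw [hwm] at h
  have h0 : T.dist m m = 0 := (dist0 hT).mpr rfl
  have h1 : T.dist m z ≠ 0 := fun hh => hz ((dist0 hT).mp hh).symm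
  have c1 := dc T z m
  omega

lemma dirv_eq_of_btw {m z w : V} (h : Btw T m z w) (hz : z ≠ m) :
    dirv hT m w = dirv hT m z := by
  have hw : w ≠ m := ne_of_btw_end hT h hz
  have hdz := dirv_dist hT hz
  have hbz := dirv_btw hT hz
  unfold Btw at h hbz
  have t1 := tri hT (dirv hT m z) z w
  have t2 := tri hT m (dirv hT m z) w
  have h2 : T.dist m (dirv hT m z) = 1 := (dist_eq_one_iff_adj (G := T)).mpr (dirv_adj hT hz)
  exact (eq_dirv hT hw (dirv_adj hT hz) (by omega)).symm

lemma dirv_ne_of_btw {m z z' : V} (h : Btw T z m z') (hz : z ≠ m) (hz' : z' ≠ m) :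
    dirv hT m z ≠ dirv hT m z' := by
  intro he
  have d1 := dirv_dist hT hz
  have d2 := dirv_dist hT hz'
  rw [he] at d1
  have t1 := tri hT z (dirv hT m z') z'
  have c1 := dc T (dirv hT m z') z
  have c2 := dc T z m
  unfold Btw at h
  omega

lemma btw_of_dirv_ne {m z z' : V} (hz : z ≠ m) (hz' : z' ≠ m)
    (h : dirv hT m z ≠ dirv hT m z') : Btw T z m z' := by
  obtain ⟨t, h1, h2, h3⟩ := median hT z z' m
  by_cases htm : t = m
  · subst htm; exact h1
  · exfalso
    -- t ≠ m, Btw m t z (from h2 sym), so dirv m z = dirv m t, similarly z'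
    have hbz : Btw T m t z := btw_symm h2
    have hbz' : Btw T m t z' := btw_symm h3
    have e1 : dirv hT m z = dirv hT m t := dirv_eq_of_btw hT hbz htm
    have e2 : dirv hT m z' = dirv hT m t := dirv_eq_of_btw hT hbz' htm
    exact h (e1.trans e2.symm)

variable [Fintype V]

omit hT in
lemma leaf_unique_nbr {u c c' : V} (hu : IsLeaf T u) (h1 : T.Adj u c) (h2 : T.Adj u c') :
    c = c' := by
  obtain ⟨x, hx⟩ := Set.ncard_eq_one.mp hu
  have e1 : c ∈ T.neighborSet u := h1
  have e2 : c' ∈ T.neighborSet u := h2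
  rw [hx] at e1 e2
  rw [Set.mem_singleton_iff] at e1 e2
  rw [e1, e2]

lemma leaf_not_btw {p u q : V} (h : Btw T p u q) (hp : p ≠ u) (hq : q ≠ u)
    (hu : IsLeaf T u) : False := by
  have hne := dirv_ne_of_btw hT h hp hq
  exact hne (leaf_unique_nbr hu (dirv_adj hT hp) (dirv_adj hT hq))

lemma three_dirs {p q r m : V} (h1 : Btw T p m q) (h2 : Btw T p m r) (h3 : Btw T q m r)
    (hp : p ≠ m) (hq : q ≠ m) (hr : r ≠ m) : IsBranchVertex T m := by
  have d1 := dirv_ne_of_btw hT h1 hp hq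
  have d2 := dirv_ne_of_btw hT h2 hp hr
  have d3 := dirv_ne_of_btw hT h3 hq hr
  have hsub : {dirv hT m p, dirv hT m q, dirv hT m r} ⊆ T.neighborSet m := by
    intro x hx
    rcases hx with hx | hx | hx <;> subst hx
    exacts [dirv_adj hT hp, dirv_adj hT hq, dirv_adj hT hr]
  have h3' : ({dirv hT m p, dirv hT m q, dirv hT m r} : Set V).ncard = 3 :=
    Set.ncard_eq_three.mpr ⟨_, _, _, d1, d2, d3, rfl⟩
  unfold IsBranchVertex
  rw [← h3']
  exact Set.ncard_le_ncard hsub (Set.toFinite _)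

omit hT in
lemma leaf_ne_branch {u : V} (hu : IsLeaf T u) (hb : IsBranchVertex T u) : False := by
  unfold IsLeaf at hu; unfold IsBranchVertex at hb; omega

lemma exists_leaf_dirv {m a : V} (hadj : T.Adj m a) :
    ∃ z, z ≠ m ∧ dirv hT m z = a ∧ IsLeaf T z := by
  classical
  set A : Set V := {z | z ≠ m ∧ dirv hT m z = a} with hA
  have haA : a ∈ A := by
    refine ⟨hadj.ne', ?_⟩
    have : T.dist a a + 1 = T.dist m a := by
      rw [(dist0 hT).mpr rfl, (dist_eq_one_iff_adj (G := T)).mpr hadj]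
    exact (eq_dirv hT hadj.ne' hadj this).symm
  obtain ⟨z, hzA, hmax⟩ := Set.exists_max_image A (T.dist m) (Set.toFinite A) ⟨a, haA⟩
  obtain ⟨hzm, hzd⟩ := hzA
  refine ⟨z, hzm, hzd, ?_⟩
  -- every neighbor of z is closer to m
  have hstep : ∀ c, T.Adj z c → T.dist m c + 1 = T.dist m z := by
    intro c hc
    rcases adj_dist_succ hT hc m with hcd | hcd
    · -- farther: c ∈ A, contradiction with max
      exfalso
      have hcm : c ≠ m := by
        intro hcm; rw [hcm, (dist0 hT).mpr rfl] at hcd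
        omega
      have hbtw : Btw T m z c := by
        unfold Btw
        rw [(dist_eq_one_iff_adj (G := T)).mpr hc]
        omega
      have : dirv hT m c = a := by rw [dirv_eq_of_btw hT hbtw hzm, hzd]
      have := hmax c ⟨hcm, this⟩
      omega
    · omega
  -- z has at least one neighbor
  have hnbr : T.Adj z (dirv hT z m) := dirv_adj hT (Ne.symm hzm)
  refine Set.ncard_eq_one.mpr ⟨dirv hT z m, ?_⟩
  ext c
  simp only [mem_neighborSet, Set.mem_singleton_iff]
  constructor
  · intro hc
    have e1 := hstep c hc
    have e2 := hstep _ hnbr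
    have b1 : Btw T m c z := by
      unfold Btw
      rw [dc T c z, (dist_eq_one_iff_adj (G := T)).mpr hc]
      omega
    have b2 : Btw T m (dirv hT z m) z := by
      unfold Btw
      rw [dc T (dirv hT z m) z, (dist_eq_one_iff_adj (G := T)).mpr hnbr]
      omega
    exact btw_unique hT b1 b2 (by omega)
  · intro hc; rw [hc]; exact hnbr

lemma exists_terminal {u : V} (hnb : ∃ v, IsBranchVertex T v) (hu : IsLeaf T u) :
    ∃ v, IsTerminalLeafOf T u v ∧ ∀ v', IsTerminalLeafOf T u v' → v' = v := by
  classical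
  obtain ⟨v0, hv0⟩ := hnb
  obtain ⟨w0, hw0B, hmin⟩ := Set.exists_min_image {v | IsBranchVertex T v} (T.dist u)
    (Set.toFinite _) ⟨v0, hv0⟩
  have hstrict : ∀ w, IsBranchVertex T w → w ≠ w0 → T.dist u w0 < T.dist u w := by
    intro w hw hne
    obtain ⟨m, h1, h2, h3⟩ := median hT u w0 w
    have hmin1 := hmin w hw
    by_cases hm0 : m = w0
    · rw [hm0] at h2
      unfold Btw at h2
      have : T.dist w0 w ≠ 0 := fun hh => hne ((dist0 hT).mp hh).symm
      omega
    by_cases hmw : m = w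
    · exfalso
      rw [hmw] at h1
      unfold Btw at h1
      have h0 : T.dist w w0 = 0 := by omega
      exact hne ((dist0 hT).mp h0)
    by_cases hmu : m = u
    · exfalso
      subst hmu
      have hw0u : w0 ≠ m := fun hh => leaf_ne_branch hu (hh ▸ hw0B)
      have hwu : w ≠ m := fun hh => leaf_ne_branch hu (hh ▸ hw)
      exact leaf_not_btw hT h3 hw0u hwu hu
    · exfalso
      have hmB : IsBranchVertex T m := three_dirs hT h1 h2 h3 (Ne.symm hmu)
        (Ne.symm hm0) (Ne.symm hmw)
      have := hmin m hmB
      unfold Btw at h1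
      have : T.dist m w0 ≠ 0 := fun hh => hm0 ((dist0 hT).mp hh)
      omega
  refine ⟨w0, ⟨hu, hw0B, hT.isConnected.preconnected u w0, ?_⟩, ?_⟩
  · intro w hw _ hne
    exact hstrict w hw hne
  · intro v' hv'
    by_contra hne
    have l1 := hv'.2.2.2 w0 hw0B (hT.isConnected.preconnected u w0) (Ne.symm hne)
    have l2 := hstrict v' hv'.2.1 hne
    omega

lemma terminal_btw_branch {u v w : V} (huv : IsTerminalLeafOf T u v)
    (hw : IsBranchVertex T w) : Btw T u v w := by
  obtain ⟨hu, hvB, -, hcond⟩ := huv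
  by_cases hwv : w = v
  · subst hwv
    unfold Btw
    rw [(dist0 hT).mpr rfl]
    omega
  obtain ⟨m, h1, h2, h3⟩ := median hT u v w
  by_cases hmv : m = v
  · subst hmv; exact h2
  by_cases hmu : m = u
  · exfalso
    subst hmu
    have hvu : v ≠ m := fun hh => leaf_ne_branch hu (hh ▸ hvB)
    have hwu : w ≠ m := fun hh => leaf_ne_branch hu (hh ▸ hw)
    exact leaf_not_btw hT h3 hvu hwu hu
  by_cases hmw : m = w
  · exfalso
    subst hmw
    -- Btw u m v with m branch, m ≠ v: contradicts minimality
    have := hcond m hw (hT.isConnected.preconnected u m) hmv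
    unfold Btw at h1
    omega
  · exfalso
    have hmB : IsBranchVertex T m := three_dirs hT h1 h2 h3 (Ne.symm hmu)
      (Ne.symm hmv) (Ne.symm hmw)
    have := hcond m hmB (hT.isConnected.preconnected u m) hmv
    unfold Btw at h1
    have : T.dist m v ≠ 0 := fun hh => hmv ((dist0 hT).mp hh)
    omega

lemma branch_btw_terminal_eq {u v w : V} (huv : IsTerminalLeafOf T u v)
    (hw : IsBranchVertex T w) (hb : Btw T u w v) : w = v := by
  by_contra hne
  have := huv.2.2.2 w hw (hT.isConnected.preconnected u w) hne
  unfold Btw at hb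
  omega

lemma dist_injective_of_no_branch (hnb : ∀ v, ¬ IsBranchVertex T v) {u : V}
    (hu : IsLeaf T u) : Function.Injective (T.dist u) := by
  intro x y hxy
  by_contra hne
  obtain ⟨m, h1, h2, h3⟩ := median hT x y u
  have e1 : T.dist u x = T.dist u m + T.dist m x := by
    have := btw_symm h2; unfold Btw at this; omega
  have e2 : T.dist u y = T.dist u m + T.dist m y := by
    have := btw_symm h3; unfold Btw at this; omega
  have hxu : x ≠ u := by
    intro hh; rw [hh, (dist0 hT).mpr rfl] at hxy
    exact hne (hh.trans ((dist0 hT).mp hxy.symm)) |>.elim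
  have hyu : y ≠ u := by
    intro hh; rw [hh, (dist0 hT).mpr rfl] at hxy
    exact hne (((dist0 hT).mp hxy).symm.trans hh.symm) |>.elim
  by_cases hmx : m = x
  · rw [← hmx] at hne
    have h0 : T.dist m x = 0 := (dist0 hT).mpr hmx
    have : T.dist m y = 0 := by omega
    exact hne ((dist0 hT).mp this)
  by_cases hmy : m = y
  · rw [← hmy] at hne
    have h0 : T.dist m y = 0 := (dist0 hT).mpr hmy
    have : T.dist m x = 0 := by omega
    exact hne ((dist0 hT).mp this).symm
  by_cases hmu : m = u
  · rw [hmu] at h1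
    exact leaf_not_btw hT h1 hxu hyu hu
  · exact hnb m (three_dirs hT h1 h2 h3 (Ne.symm hmx) (Ne.symm hmy) (Ne.symm hmu))

lemma isPathGraph_of_no_branch (hnb : ∀ v, ¬ IsBranchVertex T v) : IsPathGraph T := by
  classical
  have hne : Nonempty V := hT.isConnected.nonempty
  set n := Fintype.card V with hn
  rcases Nat.lt_or_ge n 2 with hlt | hge
  · -- n = 1
    have h1 : Fintype.card V = 1 := by
      have := Fintype.card_pos (α := V)
      omega
    haveI : Subsingleton V := Fintype.card_le_one_iff_subsingleton.mp (by omega)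
    refine ⟨1, ⟨⟨Fintype.equivFinOfCardEq h1, ?_⟩⟩⟩
    intro a b
    constructor
    · intro hadj
      exact absurd (Subsingleton.elim ((Fintype.equivFinOfCardEq h1) a)
        ((Fintype.equivFinOfCardEq h1) b) ▸ hadj) (pathGraph 1).irrefl
    · intro hadj
      exact absurd (Subsingleton.elim a b ▸ hadj) T.irrefl
  · -- get a leaf
    obtain ⟨v0⟩ := hne
    obtain ⟨z0, hz0⟩ := Fintype.exists_ne_of_one_lt_card (by omega) v0
    obtain ⟨u, hum, hud, hu⟩ := exists_leaf_dirv hT (dirv_adj hT hz0)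
    have hinj := dist_injective_of_no_branch hT hnb hu
    have hlt : ∀ x, T.dist u x < n := by
      intro x
      rw [← length_eq_dist hT (P_isPath hT u x), hn]
      exact (P_isPath hT u x).length_lt
    set g : V → Fin n := fun x => ⟨T.dist u x, hlt x⟩ with hg
    have hginj : Function.Injective g := by
      intro a b hab
      apply hinj
      have := congrArg Fin.val hab
      exact this
    have hgbij : Function.Bijective g :=
      (Fintype.bijective_iff_injective_and_card g).mpr ⟨hginj, by simp [hn]⟩
    refine ⟨n, ⟨⟨Equiv.ofBijective g hgbij, ?_⟩⟩⟩
    intro a b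
    show (pathGraph n).Adj (g a) (g b) ↔ T.Adj a b
    rw [pathGraph_adj]
    show (T.dist u a + 1 = T.dist u b ∨ T.dist u b + 1 = T.dist u a) ↔ T.Adj a b
    constructor
    · rintro (h | h)
      · -- b farther
        have hbu : b ≠ u := by
          intro hh; rw [hh, (dist0 hT).mpr rfl] at h; omega
        have hd := dirv_dist hT (Ne.symm hbu)
        rw [dc T (dirv hT b u) u] at hd
        have hcc := dc T b u
        have : T.dist u (dirv hT b u) = T.dist u a := by omega
        have : dirv hT b u = a := hinj this
        rw [← this]
        exact (dirv_adj hT (Ne.symm hbu)).symm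
      · have hau : a ≠ u := by
          intro hh; rw [hh, (dist0 hT).mpr rfl] at h; omega
        have hd := dirv_dist hT (Ne.symm hau)
        rw [dc T (dirv hT a u) u] at hd
        have hcc := dc T a u
        have : T.dist u (dirv hT a u) = T.dist u b := by omega
        have : dirv hT a u = b := hinj this
        rw [← this]
        exact dirv_adj hT (Ne.symm hau)
    · intro hadj
      rcases adj_dist_succ hT hadj u with h | h
      · left; omega
      · right; omega

lemma exists_two_away {r w : V} (hw : IsBranchVertex T w) :
    ∃ a1 a2, a1 ≠ a2 ∧ T.Adj w a1 ∧ T.Adj w a2 ∧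
      T.dist r a1 = T.dist r w + 1 ∧ T.dist r a2 = T.dist r w + 1 := by
  classical
  set N := T.neighborSet w with hN
  set Tw : Set V := {c | T.Adj w c ∧ T.dist r c + 1 = T.dist r w} with hTw
  have hTw1 : Tw.ncard ≤ 1 := by
    by_cases hrw : r = w
    · have : Tw = ∅ := by
        ext c; simp only [hTw, Set.mem_setOf_eq, Set.mem_empty_iff_false, iff_false]
        rintro ⟨-, hd⟩
        rw [← hrw, (dist0 hT).mpr rfl] at hd
        omega
      rw [this]; simp
    · have hsub : Tw ⊆ {dirv hT w r} := by
        intro c ⟨hc1, hc2⟩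
        have : c = dirv hT w r := by
          apply eq_dirv hT hrw hc1
          rw [dc T c r, dc T w r]; exact hc2
        simp [this]
      calc Tw.ncard ≤ ({dirv hT w r} : Set V).ncard := Set.ncard_le_ncard hsub (Set.toFinite _)
        _ = 1 := Set.ncard_singleton _
  have hdiff : 1 < (N \ Tw).ncard := by
    have := Set.le_ncard_diff Tw N (Set.toFinite _)
    have hw3 : 3 ≤ N.ncard := hw
    omega
  obtain ⟨a1, a2, ha1, ha2, hne⟩ := (Set.one_lt_ncard_iff (Set.toFinite _)).mp hdiff
  have key : ∀ c, c ∈ N \ Tw → T.Adj w c ∧ T.dist r c = T.dist r w + 1 := by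
    rintro c ⟨hcN, hcTw⟩
    have hadj : T.Adj w c := hcN
    refine ⟨hadj, ?_⟩
    rcases adj_dist_succ hT hadj r with h | h
    · exact h
    · exact absurd ⟨hadj, by omega⟩ hcTw
  obtain ⟨hadj1, hd1⟩ := key a1 ha1
  obtain ⟨hadj2, hd2⟩ := key a2 ha2
  exact ⟨a1, a2, hne, hadj1, hadj2, hd1, hd2⟩

lemma two_terminals_of_max (hB : ∃ v, IsBranchVertex T v) (r : V) (B' : Set V)
    (hB'sub : ∀ w ∈ B', IsBranchVertex T w)
    (hclosed : ∀ w ∈ B', ∀ b, IsBranchVertex T b → Btw T r w b → b ∈ B')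
    {w : V} (hwB' : w ∈ B') (hmax : ∀ b ∈ B', T.dist r b ≤ T.dist r w) :
    ∃ z1 z2, z1 ≠ z2 ∧ IsTerminalLeafOf T z1 w ∧ IsTerminalLeafOf T z2 w ∧
      Btw T r w z1 ∧ Btw T r w z2 := by
  have hw := hB'sub w hwB'
  obtain ⟨a1, a2, hne, hadj1, hadj2, hd1, hd2⟩ := exists_two_away hT (r := r) hw
  -- helper: from a neighbor away from r, build a terminal leaf
  have build : ∀ a, T.Adj w a → T.dist r a = T.dist r w + 1 →
      ∃ z, z ≠ w ∧ dirv hT w z = a ∧ IsTerminalLeafOf T z w ∧ Btw T r w z := by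
    intro a hadj hd
    obtain ⟨z, hzw, hzd, hz⟩ := exists_leaf_dirv hT hadj
    -- dirv w r ≠ a (or r = w)
    have hdir_ne : r ≠ w → dirv hT w r ≠ a := by
      intro hrw heq
      have := dirv_dist hT hrw
      rw [heq, dc T a r] at this
      have hcc := dc T w r
      omega
    have hbtw_rz : Btw T r w z := by
      by_cases hrw : r = w
      · subst hrw; unfold Btw; rw [(dist0 hT).mpr rfl]; omega
      · exact btw_of_dirv_ne hT hrw hzw (by rw [hzd]; exact hdir_ne hrw)
    obtain ⟨v, hv, hvuniq⟩ := exists_terminal hT hB hz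
    have hvw : v = w := by
      by_contra hvw
      -- v ≠ w : v is in direction a from w, beyond w from r
      have hb1 : Btw T z v w := terminal_btw_branch hT hv hw
      have hb2 : Btw T w v z := btw_symm hb1
      have hdv : dirv hT w v = a := by
        rw [← dirv_eq_of_btw hT hb2 hvw]
        exact hzd
      have hbrv : Btw T r w v := by
        by_cases hrw : r = w
        · subst hrw; unfold Btw; rw [(dist0 hT).mpr rfl]; omega
        · exact btw_of_dirv_ne hT hrw hvw (by rw [hdv]; exact hdir_ne hrw)
      have hvB' : v ∈ B' := hclosed w hwB' v hv.2.1 hbrv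
      have := hmax v hvB'
      unfold Btw at hbrv
      have : T.dist w v ≠ 0 := fun hh => hvw ((dist0 hT).mp hh).symm
      omega
    exact ⟨z, hzw, hzd, hvw ▸ hv, hbtw_rz⟩
  obtain ⟨z1, hz1w, hz1d, hz1t, hz1b⟩ := build a1 hadj1 hd1
  obtain ⟨z2, hz2w, hz2d, hz2t, hz2b⟩ := build a2 hadj2 hd2
  refine ⟨z1, z2, ?_, hz1t, hz2t, hz1b, hz2b⟩
  intro heq
  rw [heq, hz2d] at hz1d
  exact hne hz1d.symm

end

noncomputable def bvx [Fintype V] (hT : T.IsTree) (hB : ∃ v, IsBranchVertex T v) (u : V) : V :=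
  open scoped Classical in
  if hu : IsLeaf T u then (exists_terminal hT hB hu).choose else u

noncomputable def pick (T : SimpleGraph V) (v : V) : V :=
  open scoped Classical in
  if h : IsExteriorBranchVertex T v then h.choose else v

lemma pick_spec {v : V} (h : IsExteriorBranchVertex T v) :
    IsTerminalLeafOf T (pick T v) v := by
  rw [pick, dif_pos h]
  exact h.choose_spec

section
variable [Fintype V] (hT : T.IsTree) (hB : ∃ v, IsBranchVertex T v)
include hT hB

lemma bvx_spec {u : V} (hu : IsLeaf T u) : IsTerminalLeafOf T u (bvx hT hB u) := by
  rw [bvx, dif_pos hu]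
  exact (exists_terminal hT hB hu).choose_spec.1

lemma bvx_unique {u v : V} (hu : IsLeaf T u) (hv : IsTerminalLeafOf T u v) :
    v = bvx hT hB u := by
  rw [bvx, dif_pos hu]
  exact (exists_terminal hT hB hu).choose_spec.2 v hv

lemma bvx_pick {v : V} (h : IsExteriorBranchVertex T v) : bvx hT hB (pick T v) = v :=
  (bvx_unique hT hB (pick_spec h).1 (pick_spec h)).symm

lemma pick_injOn : Set.InjOn (pick T) {v | IsExteriorBranchVertex T v} := by
  intro v hv v' hv' heq
  have := bvx_pick hT hB hv
  rw [heq, bvx_pick hT hB hv'] at this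
  exact this.symm

lemma resolving_card :
    ({v | IsLeaf T v} \ (pick T '' {v | IsExteriorBranchVertex T v})).ncard =
      {v | IsLeaf T v}.ncard - {v | IsExteriorBranchVertex T v}.ncard := by
  have hsub : pick T '' {v | IsExteriorBranchVertex T v} ⊆ {v | IsLeaf T v} := by
    rintro x ⟨v, hv, rfl⟩
    exact (pick_spec hv).1
  rw [Set.ncard_diff hsub (Set.toFinite _),
    Set.ncard_image_of_injOn (pick_injOn hT hB)]

lemma leaf_notin_S {u : V}
    (hu : IsLeaf T u)
    (hnS : u ∉ {v | IsLeaf T v} \ (pick T '' {v | IsExteriorBranchVertex T v})) :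
    IsExteriorBranchVertex T (bvx hT hB u) ∧ u = pick T (bvx hT hB u) := by
  have : u ∈ pick T '' {v | IsExteriorBranchVertex T v} := by
    by_contra hc
    exact hnS ⟨hu, hc⟩
  obtain ⟨v, hv, hpv⟩ := this
  have hbv : bvx hT hB u = v := by rw [← hpv]; exact bvx_pick hT hB hv
  refine ⟨hbv ▸ hv, ?_⟩
  rw [hbv, hpv]

lemma exists_branch_two_terminals :
    ∃ w z1 z2, z1 ≠ z2 ∧ IsTerminalLeafOf T z1 w ∧ IsTerminalLeafOf T z2 w := by
  classical
  obtain ⟨v0, hv0⟩ := id hB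
  obtain ⟨w, hwB, hmax⟩ := Set.exists_max_image {v | IsBranchVertex T v} (T.dist v0)
    (Set.toFinite _) ⟨v0, hv0⟩
  obtain ⟨z1, z2, hne, h1, h2, -, -⟩ := two_terminals_of_max hT hB v0
    {v | IsBranchVertex T v} (fun _ h => h)
    (fun w' _ b hb _ => hb) hwB hmax
  exact ⟨w, z1, z2, hne, h1, h2⟩

lemma S_nonempty :
    ({v | IsLeaf T v} \ (pick T '' {v | IsExteriorBranchVertex T v})).Nonempty := by
  obtain ⟨w, z1, z2, hne, h1, h2⟩ := exists_branch_two_terminals hT hB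
  have hinS : ∀ z, IsTerminalLeafOf T z w → z ≠ pick T w →
      z ∈ {v | IsLeaf T v} \ (pick T '' {v | IsExteriorBranchVertex T v}) := by
    intro z hz hzp
    refine ⟨hz.1, ?_⟩
    rintro ⟨v, hv, rfl⟩
    have : bvx hT hB (pick T v) = v := bvx_pick hT hB hv
    have hw : w = bvx hT hB (pick T v) := bvx_unique hT hB hz.1 hz
    exact hzp (by rw [hw, this])
  by_cases h1p : z1 = pick T w
  · exact ⟨z2, hinS z2 h2 (by rw [← h1p]; exact (Ne.symm hne))⟩
  · exact ⟨z1, hinS z1 h1 h1p⟩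

lemma no_branch_in_dir {m e : V} (hme : T.Adj m e)
    (hS : ∀ s ∈ {v | IsLeaf T v} \ (pick T '' {v | IsExteriorBranchVertex T v}),
      s ≠ m → dirv hT m s ≠ e) :
    ∀ w, IsBranchVertex T w → w ≠ m → dirv hT m w ≠ e := by
  classical
  by_contra hcon
  push_neg at hcon
  obtain ⟨c, hcB, hcm, hcd⟩ := hcon
  set B' : Set V := {w | IsBranchVertex T w ∧ w ≠ m ∧ dirv hT m w = e} with hB'
  have hcB' : c ∈ B' := ⟨hcB, hcm, hcd⟩
  obtain ⟨w, hwB', hmax⟩ := Set.exists_max_image B' (T.dist m) (Set.toFinite _) ⟨c, hcB'⟩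
  have hclosed : ∀ w' ∈ B', ∀ b, IsBranchVertex T b → Btw T m w' b → b ∈ B' := by
    rintro w' ⟨hw'B, hw'm, hw'd⟩ b hbB hbtw
    have hbm : b ≠ m := ne_of_btw_end hT hbtw hw'm
    have : dirv hT m b = dirv hT m w' := dirv_eq_of_btw hT hbtw hw'm
    exact ⟨hbB, hbm, this.trans hw'd⟩
  obtain ⟨z1, z2, hne, h1, h2, hb1, hb2⟩ := two_terminals_of_max hT hB m B'
    (fun w' h => h.1) hclosed hwB' hmax
  have hwm : w ≠ m := hwB'.2.1
  have hdir : ∀ z, IsTerminalLeafOf T z w → Btw T m w z → z = pick T w := by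
    intro z hz hbz
    have hzm : z ≠ m := ne_of_btw_end hT hbz hwm
    have hzd : dirv hT m z = e := by
      rw [dirv_eq_of_btw hT hbz hwm]
      exact hwB'.2.2
    have hznS : z ∉ {v | IsLeaf T v} \ (pick T '' {v | IsExteriorBranchVertex T v}) := by
      intro hzS
      exact hS z hzS hzm hzd
    obtain ⟨hext, hpz⟩ := leaf_notin_S hT hB hz.1 hznS
    have : w = bvx hT hB z := bvx_unique hT hB hz.1 hz
    rw [hpz, ← this]
  have e1 := hdir z1 h1 hb1
  have e2 := hdir z2 h2 hb2
  exact hne (e1.trans e2.symm)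

lemma S_resolving :
    IsResolvingSet T ({v | IsLeaf T v} \ (pick T '' {v | IsExteriorBranchVertex T v})) := by
  classical
  set S := {v | IsLeaf T v} \ (pick T '' {v | IsExteriorBranchVertex T v}) with hSdef
  intro x y hxy
  by_contra hne
  obtain ⟨s0, hs0⟩ := S_nonempty hT hB
  obtain ⟨m, hm1, hm2, hm3⟩ := median hT x y s0
  have hd0 := hxy s0 hs0
  have hxm_ym : T.dist x m = T.dist y m := by
    unfold Btw at hm2 hm3
    have c1 := dc T x m; have c2 := dc T y m
    omega
  have hxm : x ≠ m := by
    intro hh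
    have h0 : T.dist x m = 0 := (dist0 hT).mpr hh
    unfold Btw at hm1
    have c1 := dc T y m; have c2 := dc T m y
    have : T.dist x y = 0 := by omega
    exact hne ((dist0 hT).mp this)
  have hym : y ≠ m := by
    intro hh
    have h0 : T.dist y m = 0 := (dist0 hT).mpr hh
    unfold Btw at hm1
    have c1 := dc T y m; have c2 := dc T m y
    have : T.dist x y = 0 := by omega
    exact hne ((dist0 hT).mp this)
  -- every s in S has median m
  have hmedS : ∀ s ∈ S, Btw T x m s ∧ Btw T y m s := by
    intro s hs
    obtain ⟨m', h1', h2', h3'⟩ := median hT x y s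
    have hds := hxy s hs
    have hxm' : T.dist x m' = T.dist y m' := by
      unfold Btw at h2' h3'
      have c1 := dc T x m'; have c2 := dc T y m'
      omega
    have : m' = m := by
      apply btw_unique hT h1' hm1
      unfold Btw at h1' hm1
      have c1 := dc T x m'; have c2 := dc T y m'
      have c3 := dc T x m; have c4 := dc T y m
      omega
    rw [← this]
    exact ⟨h2', h3'⟩
  have hml : ¬ IsLeaf T m := by
    intro hl
    exact (dirv_ne_of_btw hT hm1 hxm hym)
      (leaf_unique_nbr hl (dirv_adj hT hxm) (dirv_adj hT hym))
  have hSm : ∀ s ∈ S, s ≠ m := fun s hs hh => hml (hh ▸ hs.1)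
  have hSa : ∀ s ∈ S, s ≠ m → dirv hT m s ≠ dirv hT m x := fun s hs hsm =>
    dirv_ne_of_btw hT (btw_symm (hmedS s hs).1) hsm hxm
  have hSb : ∀ s ∈ S, s ≠ m → dirv hT m s ≠ dirv hT m y := fun s hs hsm =>
    dirv_ne_of_btw hT (btw_symm (hmedS s hs).2) hsm hym
  -- no branch vertex in the directions of x and y
  have hnoA := no_branch_in_dir hT hB (dirv_adj hT hxm) hSa
  have hnoB := no_branch_in_dir hT hB (dirv_adj hT hym) hSb
  -- a leaf in a given direction whose branch vertex must be m
  have key : ∀ e, T.Adj m e →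
      (∀ s ∈ S, s ≠ m → dirv hT m s ≠ e) →
      (∀ w, IsBranchVertex T w → w ≠ m → dirv hT m w ≠ e) →
      ∃ z, IsLeaf T z ∧ z ≠ m ∧ dirv hT m z = e ∧ bvx hT hB z = m := by
    intro e hme hSe hBe
    obtain ⟨z, hzm, hzd, hz⟩ := exists_leaf_dirv hT hme
    have hznS : z ∉ S := fun hzS => hSe z hzS hzm hzd
    obtain ⟨hext, hpz⟩ := leaf_notin_S hT hB hz hznS
    refine ⟨z, hz, hzm, hzd, ?_⟩
    by_contra hvm
    set v := bvx hT hB z with hv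
    have hterm : IsTerminalLeafOf T z v := bvx_spec hT hB hz
    have hvB : IsBranchVertex T v := hterm.2.1
    have hdv : dirv hT m v ≠ e := hBe v hvB hvm
    -- so m lies strictly between z and v
    have hbtw : Btw T z m v := by
      apply btw_of_dirv_ne hT hzm hvm
      rw [hzd]
      exact fun hh => hdv hh.symm
    -- m is a branch vertex: neighbors dirv m x, dirv m y, dirv m v distinct
    have hdvx : dirv hT m v ≠ dirv hT m x := hnoA v hvB hvm
    have hdvy : dirv hT m v ≠ dirv hT m y := hnoB v hvB hvm
    have hdxy : dirv hT m x ≠ dirv hT m y := dirv_ne_of_btw hT hm1 hxm hym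
    have hmB : IsBranchVertex T m := by
      have hsub : {dirv hT m v, dirv hT m x, dirv hT m y} ⊆ T.neighborSet m := by
        intro t ht
        rcases ht with ht | ht | ht <;> subst ht
        exacts [dirv_adj hT hvm, dirv_adj hT hxm, dirv_adj hT hym]
      have h3' : ({dirv hT m v, dirv hT m x, dirv hT m y} : Set V).ncard = 3 :=
        Set.ncard_eq_three.mpr ⟨_, _, _, hdvx, hdvy, hdxy, rfl⟩
      unfold IsBranchVertex
      rw [← h3']
      exact Set.ncard_le_ncard hsub (Set.toFinite _)
    exact hvm (branch_btw_terminal_eq hT hterm hmB hbtw).symm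
  obtain ⟨za, hza, hzam, hzad, hzab⟩ := key (dirv hT m x) (dirv_adj hT hxm) hSa hnoA
  obtain ⟨zb, hzb, hzbm, hzbd, hzbb⟩ := key (dirv hT m y) (dirv_adj hT hym) hSb hnoB
  have hzanb : za ≠ zb := by
    intro heq
    rw [heq, hzbd] at hzad
    exact (dirv_ne_of_btw hT hm1 hxm hym) hzad.symm
  -- but both za and zb are not in S, so both equal pick m
  have hSa' : za ∉ S := fun hz => hSa za hz hzam hzad
  have hSb' : zb ∉ S := fun hz => hSb zb hz hzbm hzbd
  obtain ⟨-, hpa⟩ := leaf_notin_S hT hB hza hSa'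
  obtain ⟨-, hpb⟩ := leaf_notin_S hT hB hzb hSb'
  rw [hzab] at hpa
  rw [hzbb] at hpb
  exact hzanb (hpa.trans hpb.symm)

omit hB in
lemma btw_trans {a b c d : V} (h1 : Btw T a b c) (h2 : Btw T a c d) : Btw T b c d := by
  unfold Btw at *
  have t1 := tri hT b c d
  have t2 := tri hT a b d
  omega

/-- the leg of a leaf `u`: the segment from `u` to its branch vertex, excluding it -/
def leg (hT : T.IsTree) (hB : ∃ v, IsBranchVertex T v) [Fintype V] (u : V) : Set V :=
  {z | Btw T u z (bvx hT hB u) ∧ z ≠ bvx hT hB u}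

lemma self_mem_leg {u : V} (hu : IsLeaf T u) : u ∈ leg hT hB u := by
  constructor
  · unfold Btw; rw [(dist0 hT).mpr rfl]; omega
  · intro hh
    exact leaf_ne_branch hu (hh ▸ (bvx_spec hT hB hu).2.1)

lemma dirv_at_bvx_ne {u u' : V} (hu : IsLeaf T u) (hu' : IsLeaf T u') (hne : u ≠ u')
    (hbv : bvx hT hB u = bvx hT hB u') :
    dirv hT (bvx hT hB u) u ≠ dirv hT (bvx hT hB u) u' := by
  set v := bvx hT hB u with hv
  have hterm : IsTerminalLeafOf T u v := bvx_spec hT hB hu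
  have hterm' : IsTerminalLeafOf T u' v := hbv ▸ bvx_spec hT hB hu'
  have huv : u ≠ v := fun hh => leaf_ne_branch hu (hh ▸ hterm.2.1)
  have hu'v : u' ≠ v := fun hh => leaf_ne_branch hu' (hh ▸ hterm'.2.1)
  intro heq
  have hnb : ¬ Btw T u v u' := fun hb => dirv_ne_of_btw hT hb huv hu'v heq
  obtain ⟨t, h1, h2, h3⟩ := median hT u u' v
  by_cases htv : t = v
  · exact hnb (htv ▸ h1)
  by_cases htu : t = u
  · rw [htu] at h3
    exact leaf_not_btw hT h3 (Ne.symm hne) (Ne.symm huv) hu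
  by_cases htu' : t = u'
  · rw [htu'] at h2
    exact leaf_not_btw hT h2 hne (Ne.symm hu'v) hu'
  · have htB : IsBranchVertex T t := three_dirs hT h1 h2 h3 (Ne.symm htu) (Ne.symm htu')
      (Ne.symm htv)
    exact htv (branch_btw_terminal_eq hT hterm htB h2)

lemma mem_leg_of_dirv {u z : V} (hu : IsLeaf T u) (hzv : z ≠ bvx hT hB u)
    (hdir : dirv hT (bvx hT hB u) z = dirv hT (bvx hT hB u) u) : z ∈ leg hT hB u := by
  set v := bvx hT hB u with hv
  have hterm : IsTerminalLeafOf T u v := bvx_spec hT hB hu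
  have huv : u ≠ v := fun hh => leaf_ne_branch hu (hh ▸ hterm.2.1)
  by_cases hzu : z = u
  · rw [hzu]; exact self_mem_leg hT hB hu
  have hnb : ¬ Btw T z v u := fun hb => dirv_ne_of_btw hT hb hzv huv hdir
  obtain ⟨t, h1, h2, h3⟩ := median hT z u v
  by_cases htv : t = v
  · exact absurd (htv ▸ h1) hnb
  by_cases htu : t = u
  · rw [htu] at h2
    exact (leaf_not_btw hT h2 hzu (Ne.symm huv) hu).elim
  by_cases htz : t = z
  · refine ⟨?_, hzv⟩
    rw [htz] at h3
    exact h3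
  · exfalso
    have htB : IsBranchVertex T t := three_dirs hT h1 h2 h3 (Ne.symm htz) (Ne.symm htu)
      (Ne.symm htv)
    exact htv (branch_btw_terminal_eq hT hterm htB h3)

lemma leg_disjoint {u u' z : V} (hu : IsLeaf T u) (hu' : IsLeaf T u') (hne : u ≠ u')
    (h : z ∈ leg hT hB u) (h' : z ∈ leg hT hB u') : False := by
  obtain ⟨hbz, hzv⟩ := h
  obtain ⟨hbz', hzv'⟩ := h'
  set v := bvx hT hB u with hv
  set v' := bvx hT hB u' with hv'
  have hterm : IsTerminalLeafOf T u v := bvx_spec hT hB hu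
  have hterm' : IsTerminalLeafOf T u' v' := bvx_spec hT hB hu'
  by_cases hvv : v = v'
  · -- same branch vertex: z is in both directions
    rw [← hvv] at hbz' hzv'
    have e1 : dirv hT v u = dirv hT v z := dirv_eq_of_btw hT (btw_symm hbz) hzv
    have e2 : dirv hT v u' = dirv hT v z := dirv_eq_of_btw hT (btw_symm hbz') hzv'
    have hbvv : bvx hT hB u = bvx hT hB u' := by rw [← hv, ← hv']; exact hvv
    exact dirv_at_bvx_ne hT hB hu hu' hne hbvv (e1.trans e2.symm)
  · -- different branch vertices
    have hbuv : Btw T u v v' := terminal_btw_branch hT hterm hterm'.2.1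
    have hzvv : Btw T z v v' := btw_trans hT hbz hbuv
    have hb2 : Btw T u' v v' := by
      unfold Btw at hbz' hzvv ⊢
      have t1 := tri hT u' z v
      have t2 := tri hT u' v v'
      omega
    exact hvv (branch_btw_terminal_eq hT hterm' hterm.2.1 hb2)

lemma leg_miss {S' : Set V} (hres : IsResolvingSet T S') {u u' : V} (hu : IsLeaf T u)
    (hu' : IsLeaf T u') (hne : u ≠ u') (hbv : bvx hT hB u = bvx hT hB u')
    (hm : leg hT hB u ∩ S' = ∅) (hm' : leg hT hB u' ∩ S' = ∅) : False := by
  have hterm : IsTerminalLeafOf T u (bvx hT hB u) := bvx_spec hT hB hu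
  have hterm' : IsTerminalLeafOf T u' (bvx hT hB u) := by
    rw [hbv]; exact bvx_spec hT hB hu'
  have huv : u ≠ bvx hT hB u := fun hh => leaf_ne_branch hu (hh ▸ hterm.2.1)
  have hu'v : u' ≠ bvx hT hB u := fun hh => leaf_ne_branch hu' (hh ▸ hterm'.2.1)
  have hpq : dirv hT (bvx hT hB u) u ≠ dirv hT (bvx hT hB u) u' :=
    dirv_at_bvx_ne hT hB hu hu' hne hbv
  have hp_adj : T.Adj (bvx hT hB u) (dirv hT (bvx hT hB u) u) := dirv_adj hT huv
  have hq_adj : T.Adj (bvx hT hB u) (dirv hT (bvx hT hB u) u') := dirv_adj hT hu'v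
  have hdist : ∀ s ∈ S',
      T.dist (dirv hT (bvx hT hB u) u) s = T.dist (dirv hT (bvx hT hB u) u') s := by
    intro s hs
    by_cases hsv : s = bvx hT hB u
    · rw [hsv, dc T (dirv hT (bvx hT hB u) u) (bvx hT hB u),
        dc T (dirv hT (bvx hT hB u) u') (bvx hT hB u),
        (dist_eq_one_iff_adj (G := T)).mpr hp_adj,
        (dist_eq_one_iff_adj (G := T)).mpr hq_adj]
    · have hsu : dirv hT (bvx hT hB u) s ≠ dirv hT (bvx hT hB u) u := by
        intro heq
        have : s ∈ leg hT hB u := mem_leg_of_dirv hT hB hu hsv heq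
        exact absurd (Set.mem_inter this hs) (by rw [hm]; exact Set.notMem_empty s)
      have hsu' : dirv hT (bvx hT hB u) s ≠ dirv hT (bvx hT hB u) u' := by
        intro heq
        have : s ∈ leg hT hB u' := by
          apply mem_leg_of_dirv hT hB hu' (by rw [← hbv]; exact hsv)
          rw [← hbv]
          exact heq
        exact absurd (Set.mem_inter this hs) (by rw [hm']; exact Set.notMem_empty s)
      -- dirv of a neighbor is itself
      have selfdir : ∀ c, T.Adj (bvx hT hB u) c → dirv hT (bvx hT hB u) c = c := by
        intro c hc
        symm
        apply eq_dirv hT hc.ne' hc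
        rw [(dist0 hT).mpr rfl, (dist_eq_one_iff_adj (G := T)).mpr hc]
      have hb1 : Btw T (dirv hT (bvx hT hB u) u) (bvx hT hB u) s := by
        apply btw_of_dirv_ne hT hp_adj.ne' hsv
        rw [selfdir _ hp_adj]
        exact fun hh => hsu hh.symm
      have hb2 : Btw T (dirv hT (bvx hT hB u) u') (bvx hT hB u) s := by
        apply btw_of_dirv_ne hT hq_adj.ne' hsv
        rw [selfdir _ hq_adj]
        exact fun hh => hsu' hh.symm
      unfold Btw at hb1 hb2
      have d1 : T.dist (dirv hT (bvx hT hB u) u) (bvx hT hB u) = 1 :=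
        (dist_eq_one_iff_adj (G := T)).mpr hp_adj.symm
      have d2 : T.dist (dirv hT (bvx hT hB u) u') (bvx hT hB u) = 1 :=
        (dist_eq_one_iff_adj (G := T)).mpr hq_adj.symm
      omega
  exact hpq (hres _ _ hdist)

lemma lower_bound {S' : Set V} (hres : IsResolvingSet T S') :
    {v | IsLeaf T v}.ncard - {v | IsExteriorBranchVertex T v}.ncard ≤ S'.ncard := by
  classical
  set Lf := {v | IsLeaf T v} with hLf
  set Ex := {v | IsExteriorBranchVertex T v} with hEx
  set Lhit := {u | u ∈ Lf ∧ (leg hT hB u ∩ S').Nonempty} with hLhit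
  set Lmiss := {u | u ∈ Lf ∧ ¬ (leg hT hB u ∩ S').Nonempty} with hLmiss
  have h1 : Lhit.ncard ≤ S'.ncard := by
    set f : V → V := fun u =>
      if h : (leg hT hB u ∩ S').Nonempty then h.choose else u with hf
    apply Set.ncard_le_ncard_of_injOn f
    · intro u hu
      have := hu.2
      rw [hf]; simp only [dif_pos this]
      exact this.choose_spec.2
    · intro u hu u' hu' heq
      by_contra hne
      have e1 : f u ∈ leg hT hB u ∩ S' := by
        rw [hf]; simp only [dif_pos hu.2]; exact hu.2.choose_spec
      have e2 : f u' ∈ leg hT hB u' ∩ S' := by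
        rw [hf]; simp only [dif_pos hu'.2]; exact hu'.2.choose_spec
      rw [heq] at e1
      exact leg_disjoint hT hB hu.1 hu'.1 hne e1.1 e2.1
  have h2 : Lmiss.ncard ≤ Ex.ncard := by
    apply Set.ncard_le_ncard_of_injOn (bvx hT hB)
    · intro u hu
      exact ⟨u, bvx_spec hT hB hu.1⟩
    · intro u hu u' hu' heq
      by_contra hne
      exact leg_miss hT hB hres hu.1 hu'.1 hne heq
        (Set.not_nonempty_iff_eq_empty.mp hu.2) (Set.not_nonempty_iff_eq_empty.mp hu'.2)
  have h3 : Lf.ncard ≤ Lhit.ncard + Lmiss.ncard := by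
    have : Lf ⊆ Lhit ∪ Lmiss := by
      intro u hu
      by_cases h : (leg hT hB u ∩ S').Nonempty
      · exact Or.inl ⟨hu, h⟩
      · exact Or.inr ⟨hu, h⟩
    calc Lf.ncard ≤ (Lhit ∪ Lmiss).ncard := Set.ncard_le_ncard this (Set.toFinite _)
      _ ≤ Lhit.ncard + Lmiss.ncard := Set.ncard_union_le _ _
  omega

end
end TreeAux

theorem tree_metricDim_formula {V : Type*} [Fintype V] (T : SimpleGraph V)
    (hT : T.IsTree) (hnp : ¬ IsPathGraph T) :
    metricDim T = {v | IsLeaf T v}.ncard - {v | IsExteriorBranchVertex T v}.ncard := by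
  classical
  have hB : ∃ v, IsBranchVertex T v := by
    by_contra h
    push_neg at h
    exact hnp (TreeAux.isPathGraph_of_no_branch hT h)
  have hmem : ({v | IsLeaf T v}.ncard - {v | IsExteriorBranchVertex T v}.ncard) ∈
      {n | ∃ S : Set V, S.ncard = n ∧ IsResolvingSet T S} :=
    ⟨_, TreeAux.resolving_card hT hB, TreeAux.S_resolving hT hB⟩
  apply le_antisymm
  · exact Nat.sInf_le hmem
  · apply le_csInf ⟨_, hmem⟩
    rintro n ⟨S', hcard, hres⟩
    rw [← hcard]
    exact TreeAux.lower_bound hT hB hres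
end
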